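/- arXiv:1707.01398 — 3 statements merged into one kernel-verified Lean document; each statement's English description precedes it below -/
import Mathlib

section
/- Let Γ be a smooth Jordan curve in the plane. Then there exists ν > 0 with the following property: if A ⊂ Γ is a finite set that is ν-dense in Γ (with respect to the Euclidean metric) and φ : A → X is a λ-Lipschitz map into a geodesic metric space X, then the piecewise geodesic extension φ̄ : Γ → X of φ (mapping each arc of Γ between consecutive points of A to a geodesic in X joining their images) is 3λ-Lipschitz with respect to the Euclidean metric on Γ. -/
universe u

open Metric Set

local notation "E₂" => EuclideanSpace ℝ (Fin 2)

open intervalIntegral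

/-- The intrinsic length (pseudo)metric of a subset `Γ ⊆ ℝ²`: the infimal length (total
variation) of continuous paths inside `Γ` joining the two points (`∞` if there is none). -/
noncomputable def lengthMetricIn (Γ : Set E₂) (x y : E₂) : ENNReal :=
  ⨅ (γ : {γ : ℝ → E₂ // ContinuousOn γ (Set.Icc 0 1) ∧ Set.MapsTo γ (Set.Icc 0 1) Γ ∧
      γ 0 = x ∧ γ 1 = y}), eVariationOn γ.1 (Set.Icc 0 1)

/-- A geodesic metric space: any two points are joined by a curve of length equal to their
distance (an isometric parametrization of `[0, d(x,y)]`). -/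
def IsGeodesicSpace (X : Type*) [MetricSpace X] : Prop :=
  ∀ x y : X, ∃ f : ℝ → X, f 0 = x ∧ f (dist x y) = y ∧
    ∀ s ∈ Set.Icc 0 (dist x y), ∀ t ∈ Set.Icc 0 (dist x y), dist (f s) (f t) = |s - t|

namespace Stmt0Aux

/-! ### Circle distance -/

noncomputable def cd (L z : ℝ) : ℝ := ‖((z : ℝ) : AddCircle L)‖

lemma cd_nonneg (L z : ℝ) : 0 ≤ cd L z := norm_nonneg _

lemma cd_le_abs (L z : ℝ) : cd L z ≤ |z| := by
  simpa [cd, Real.norm_eq_abs] using QuotientAddGroup.norm_mk_le_norm (S := AddSubgroup.zmultiples L) (m := z)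

lemma cd_neg (L z : ℝ) : cd L (-z) = cd L z := by
  unfold cd
  rw [show ((-z : ℝ) : AddCircle L) = -((z : ℝ) : AddCircle L) from rfl, norm_neg]

lemma cd_triangle (L a b : ℝ) : cd L (a + b) ≤ cd L a + cd L b := by
  unfold cd
  rw [show ((a + b : ℝ) : AddCircle L) = ((a : ℝ) : AddCircle L) + ((b : ℝ) : AddCircle L) from rfl]
  exact norm_add_le _ _

lemma cd_add_int_mul (L z : ℝ) (k : ℤ) : cd L (z + k * L) = cd L z := by
  unfold cd
  have : ((z + k * L : ℝ) : AddCircle L) = ((z : ℝ) : AddCircle L) := by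
    rw [AddCircle.coe_add]
    have : ((k * L : ℝ) : AddCircle L) = 0 := by
      rw [QuotientAddGroup.eq_zero_iff]
      simpa [zsmul_eq_mul] using AddSubgroup.zsmul_mem_zmultiples L k
    rw [this, add_zero]
  rw [this]

lemma cd_ge_min {L z : ℝ} (hL : 0 < L) (h0 : 0 ≤ z) (h1 : z ≤ L) : min z (L - z) ≤ cd L z := by
  have h := AddCircle.norm_eq (p := L) (x := z)
  set k : ℤ := round (L⁻¹ * z) with hk
  rcases le_or_gt (k : ℝ) 0 with hk0 | hk1
  · have : z ≤ |z - k * L| := by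
      have : (k : ℝ) * L ≤ 0 := mul_nonpos_of_nonpos_of_nonneg hk0 hL.le
      rw [abs_of_nonneg (by linarith)]; linarith
    calc min z (L - z) ≤ z := min_le_left _ _
      _ ≤ cd L z := by rw [cd, h]; exact this
  · have hk1' : (1 : ℝ) ≤ (k : ℝ) := by exact_mod_cast hk1
    have : L - z ≤ |z - k * L| := by
      have : L ≤ (k : ℝ) * L := le_mul_of_one_le_left hL.le hk1'
      rw [abs_of_nonpos (by linarith)]; linarith
    calc min z (L - z) ≤ L - z := min_le_right _ _
      _ ≤ cd L z := by rw [cd, h]; exact this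


/-- Piecewise-Lipschitz implies Lipschitz: abstract induction over the finitely many
break points in an interval. -/
lemma lip_of_base {X : Type u} [MetricSpace X] {T' : Set ℝ}
    (hfin : ∀ a b : ℝ, (T' ∩ Set.Icc a b).Finite) {ψ : ℝ → X} {F : ℝ → ℝ}
    (hbase : ∀ s t : ℝ, s ≤ t → T' ∩ Set.Ioo s t = ∅ → dist (ψ s) (ψ t) ≤ F t - F s) :
    ∀ s t : ℝ, s ≤ t → dist (ψ s) (ψ t) ≤ F t - F s := by
  have key : ∀ n : ℕ, ∀ s t : ℝ, s ≤ t → (T' ∩ Set.Ioo s t).ncard = n →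
      dist (ψ s) (ψ t) ≤ F t - F s := by
    intro n
    induction n using Nat.strong_induction_on with
    | _ n ih =>
      intro s t hst hcard
      rcases (T' ∩ Set.Ioo s t).eq_empty_or_nonempty with he | ⟨w, hwT, hw⟩
      · exact hbase s t hst he
      · have hbig : (T' ∩ Set.Ioo s t).Finite :=
          (hfin s t).subset (inter_subset_inter_right _ Set.Ioo_subset_Icc_self)
        have hsub1 : (T' ∩ Set.Ioo s w) ⊂ (T' ∩ Set.Ioo s t) := by
          constructor
          · exact inter_subset_inter_right _ (Set.Ioo_subset_Ioo le_rfl hw.2.le)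
          · intro hcon
            exact absurd (hcon ⟨hwT, hw⟩).2.2 (lt_irrefl w)
        have hsub2 : (T' ∩ Set.Ioo w t) ⊂ (T' ∩ Set.Ioo s t) := by
          constructor
          · exact inter_subset_inter_right _ (Set.Ioo_subset_Ioo hw.1.le le_rfl)
          · intro hcon
            exact absurd (hcon ⟨hwT, hw⟩).2.1 (lt_irrefl w)
        have h1 : (T' ∩ Set.Ioo s w).ncard < n := by
          rw [← hcard]; exact Set.ncard_lt_ncard hsub1 hbig
        have h2 : (T' ∩ Set.Ioo w t).ncard < n := by
          rw [← hcard]; exact Set.ncard_lt_ncard hsub2 hbig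
        calc dist (ψ s) (ψ t) ≤ dist (ψ s) (ψ w) + dist (ψ w) (ψ t) := dist_triangle _ _ _
          _ ≤ (F w - F s) + (F t - F w) :=
              add_le_add (ih _ h1 s w hw.1.le rfl) (ih _ h2 w t hw.2.le rfl)
          _ = F t - F s := by ring
  intro s t hst
  exact key _ s t hst rfl

/-- Ratio algebra for geodesic pieces. -/
lemma ratio_abs_le {lam lu ls lt lv D : ℝ} (h1 : lu ≤ ls) (h2 : ls ≤ lt) (h3 : lt ≤ lv)
    (h4 : lu < lv) (hD0 : 0 ≤ D) (hD : D ≤ lam * (lv - lu)) :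
    |(ls - lu) / (lv - lu) * D - (lt - lu) / (lv - lu) * D| ≤ lam * (lt - ls) := by
  have hpos : (0:ℝ) < lv - lu := by linarith
  have heq : (ls - lu) / (lv - lu) * D - (lt - lu) / (lv - lu) * D
      = -(((lt - ls) / (lv - lu)) * D) := by ring
  have h5 : (0:ℝ) ≤ lt - ls := by linarith
  rw [heq, abs_neg, abs_of_nonneg (mul_nonneg (div_nonneg h5 hpos.le) hD0)]
  rw [div_mul_eq_mul_div, div_le_iff₀ hpos]
  nlinarith [mul_le_mul_of_nonneg_left hD h5]

lemma periodic_exists_bound {f : ℝ → ℝ} (hf : Continuous f) (hp : Function.Periodic f 1) :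
    ∃ M, ∀ t, f t ≤ M := by
  obtain ⟨t₀, _, hmax⟩ := isCompact_Icc.exists_isMaxOn
    (⟨0, by norm_num⟩ : (Set.Icc (0:ℝ) 1).Nonempty) hf.continuousOn
  refine ⟨f t₀, fun t => ?_⟩
  have hft : f (Int.fract t) = f t := by
    have h := hp.sub_int_mul_eq (x := t) (n := ⌊t⌋)
    rw [mul_one] at h
    rw [Int.self_sub_floor] at h
    exact h
  rw [← hft]
  exact hmax ⟨Int.fract_nonneg t, (Int.fract_lt_one t).le⟩

lemma periodic_exists_pos_lb {f : ℝ → ℝ} (hf : Continuous f) (hp : Function.Periodic f 1)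
    (hpos : ∀ t, 0 < f t) : ∃ m, 0 < m ∧ ∀ t, m ≤ f t := by
  obtain ⟨t₀, _, hmin⟩ := isCompact_Icc.exists_isMinOn
    (⟨0, by norm_num⟩ : (Set.Icc (0:ℝ) 1).Nonempty) hf.continuousOn
  refine ⟨f t₀, hpos t₀, fun t => ?_⟩
  have hft : f (Int.fract t) = f t := by
    have h := hp.sub_int_mul_eq (x := t) (n := ⌊t⌋)
    rw [mul_one] at h
    rw [Int.self_sub_floor] at h
    exact h
  rw [← hft]
  exact hmin ⟨Int.fract_nonneg t, (Int.fract_lt_one t).le⟩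

lemma deriv_periodic {F : Type*} [NormedAddCommGroup F] [NormedSpace ℝ F] {γ : ℝ → F}
    (hper : Function.Periodic γ 1) : Function.Periodic (deriv γ) 1 := by
  intro t
  have h1 : (fun x => γ (x + 1)) = γ := funext hper
  calc deriv γ (t + 1) = deriv (fun x => γ (x + 1)) t := (deriv_comp_add_const γ 1 t).symm
    _ = deriv γ t := by rw [h1]

/-- Arc length function of a curve. -/
noncomputable def arcl (γ : ℝ → E₂) (t : ℝ) : ℝ := ∫ u in (0:ℝ)..t, ‖deriv γ u‖

lemma curve_facts {γ : ℝ → E₂} (hγ : ContDiff ℝ (⊤ : ℕ∞) γ) (hper : Function.Periodic γ 1)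
    (hder : ∀ t, deriv γ t ≠ 0) :
    ∃ m : ℝ, 0 < m ∧ (∀ s t : ℝ, s ≤ t → m * (t - s) ≤ arcl γ t - arcl γ s) ∧
      (∀ t : ℝ, arcl γ (t + 1) = arcl γ t + arcl γ 1) ∧
      (∀ s t : ℝ, s ≤ t → ‖γ t - γ s‖ ≤ arcl γ t - arcl γ s) ∧
      (∀ ε : ℝ, 0 < ε → ∃ h : ℝ, 0 < h ∧ ∀ s t : ℝ, s ≤ t → t - s ≤ h →
        arcl γ t - arcl γ s ≤ (1 + ε) * ‖γ t - γ s‖) := by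
  have hγ0 : ContDiff ℝ ((⊤:ℕ∞):WithTop ℕ∞) γ := hγ.of_le (by simp)
  obtain ⟨hdiff, hγ'⟩ := contDiff_infty_iff_deriv.mp hγ0
  obtain ⟨hdiff2, hγ''⟩ := contDiff_infty_iff_deriv.mp hγ'
  have hdc : Continuous (deriv γ) := hγ'.continuous
  have hdc2 : Continuous (deriv (deriv γ)) := hγ''.continuous
  have hperd : Function.Periodic (deriv γ) 1 := deriv_periodic hper
  have hperd2 : Function.Periodic (deriv (deriv γ)) 1 := deriv_periodic hperd
  have hpnorm : Function.Periodic (fun t => ‖deriv γ t‖) 1 := fun t => by simp [hperd t]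
  have hpnorm2 : Function.Periodic (fun t => ‖deriv (deriv γ) t‖) 1 := fun t => by
    simp [hperd2 t]
  obtain ⟨m, hm, hmle⟩ := periodic_exists_pos_lb hdc.norm hpnorm
    (fun t => norm_pos_iff.mpr (hder t))
  obtain ⟨C0, hC0⟩ := periodic_exists_bound hdc2.norm hpnorm2
  have hC0nn : 0 ≤ C0 := le_trans (norm_nonneg _) (hC0 0)
  have hInt : ∀ a b : ℝ, IntervalIntegrable (fun u => ‖deriv γ u‖) MeasureTheory.volume a b :=
    fun a b => hdc.norm.intervalIntegrable a b
  have arcl_sub : ∀ s t : ℝ, arcl γ t - arcl γ s = ∫ u in s..t, ‖deriv γ u‖ := by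
    intro s t
    rw [arcl, arcl, integral_interval_sub_left (hInt 0 t) (hInt 0 s)]
  have hml : ∀ s t : ℝ, s ≤ t → m * (t - s) ≤ arcl γ t - arcl γ s := by
    intro s t hst
    rw [arcl_sub]
    calc m * (t - s) = ∫ _ in s..t, m := by rw [integral_const, smul_eq_mul, mul_comm]
      _ ≤ ∫ u in s..t, ‖deriv γ u‖ :=
          integral_mono_on hst (intervalIntegrable_const) (hInt s t) (fun u _ => hmle u)
  have hl1 : ∀ t : ℝ, arcl γ (t + 1) = arcl γ t + arcl γ 1 := by
    intro t
    have h1 := hpnorm.intervalIntegral_add_eq t 0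
    rw [zero_add] at h1
    have h2 : arcl γ (t + 1) - arcl γ t = arcl γ 1 - arcl γ 0 := by
      rw [arcl_sub, arcl_sub, h1]
    have h3 : arcl γ 0 = 0 := integral_same
    linarith
  have hFTC : ∀ s t : ℝ, γ t - γ s = ∫ u in s..t, deriv γ u := by
    intro s t
    rw [integral_deriv_eq_sub (fun x _ => hdiff x) (hdc.intervalIntegrable s t)]
  have chord_le : ∀ s t : ℝ, s ≤ t → ‖γ t - γ s‖ ≤ arcl γ t - arcl γ s := by
    intro s t hst
    rw [arcl_sub, hFTC]
    exact norm_integral_le_integral_norm hst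
  have hFTC2 : ∀ s t : ℝ, deriv γ t - deriv γ s = ∫ u in s..t, deriv (deriv γ) u := by
    intro s t
    rw [integral_deriv_eq_sub (fun x _ => hdiff2 x) (hdc2.intervalIntegrable s t)]
  have dlip : ∀ s t : ℝ, s ≤ t → ‖deriv γ t - deriv γ s‖ ≤ C0 * (t - s) := by
    intro s t hst
    rw [hFTC2]
    calc ‖∫ u in s..t, deriv (deriv γ) u‖ ≤ ∫ u in s..t, ‖deriv (deriv γ) u‖ :=
        norm_integral_le_integral_norm hst
      _ ≤ ∫ _ in s..t, C0 :=
        integral_mono_on hst (hdc2.norm.intervalIntegrable s t) intervalIntegrable_const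
          (fun u _ => hC0 u)
      _ = C0 * (t - s) := by rw [integral_const, smul_eq_mul, mul_comm]
  have taylor : ∀ s t : ℝ, s ≤ t → ‖γ t - γ s - (t - s) • deriv γ s‖ ≤ C0 * (t - s)^2 := by
    intro s t hst
    have h1 : (t - s) • deriv γ s = ∫ _ in s..t, deriv γ s := (integral_const _).symm
    rw [hFTC, h1, ← integral_sub (hdc.intervalIntegrable s t) intervalIntegrable_const]
    calc ‖∫ u in s..t, (deriv γ u - deriv γ s)‖
        ≤ ∫ u in s..t, ‖deriv γ u - deriv γ s‖ := norm_integral_le_integral_norm hst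
      _ ≤ ∫ _ in s..t, C0 * (t - s) :=
        integral_mono_on hst ((hdc.sub continuous_const).norm.intervalIntegrable s t)
          intervalIntegrable_const
          (fun u hu => le_trans (dlip s u hu.1)
            (mul_le_mul_of_nonneg_left (by linarith [hu.2]) hC0nn))
      _ = C0 * (t - s)^2 := by rw [integral_const, smul_eq_mul]; ring
  have arc_upper : ∀ s t : ℝ, s ≤ t →
      arcl γ t - arcl γ s ≤ (t - s) * ‖deriv γ s‖ + C0 * (t - s)^2 := by
    intro s t hst
    rw [arcl_sub]
    calc (∫ u in s..t, ‖deriv γ u‖)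
        ≤ ∫ _ in s..t, (‖deriv γ s‖ + C0 * (t - s)) :=
        integral_mono_on hst (hInt s t) intervalIntegrable_const (fun u hu => by
          have h2 := dlip s u hu.1
          have h3 : ‖deriv γ u‖ ≤ ‖deriv γ s‖ + ‖deriv γ u - deriv γ s‖ := by
            calc ‖deriv γ u‖ = ‖deriv γ s + (deriv γ u - deriv γ s)‖ := by congr 1; abel
              _ ≤ _ := norm_add_le _ _
          have h4 : C0 * (u - s) ≤ C0 * (t - s) :=
            mul_le_mul_of_nonneg_left (by linarith [hu.2]) hC0nn
          linarith)
      _ = (t - s) * ‖deriv γ s‖ + C0 * (t - s)^2 := by rw [integral_const, smul_eq_mul]; ring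
  have chord_lower : ∀ s t : ℝ, s ≤ t →
      (t - s) * ‖deriv γ s‖ - C0 * (t - s)^2 ≤ ‖γ t - γ s‖ := by
    intro s t hst
    have h1 : ‖(t - s) • deriv γ s‖ = (t - s) * ‖deriv γ s‖ := by
      rw [norm_smul, Real.norm_eq_abs, abs_of_nonneg (by linarith)]
    have h2 : ‖(t - s) • deriv γ s‖ ≤ ‖γ t - γ s‖ + ‖(t - s) • deriv γ s - (γ t - γ s)‖ := by
      calc ‖(t - s) • deriv γ s‖
          = ‖(γ t - γ s) + ((t - s) • deriv γ s - (γ t - γ s))‖ := by congr 1; abel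
        _ ≤ _ := norm_add_le _ _
    have h3 : ‖(t - s) • deriv γ s - (γ t - γ s)‖ ≤ C0 * (t - s)^2 := by
      rw [norm_sub_rev]
      exact taylor s t hst
    linarith
  refine ⟨m, hm, hml, hl1, chord_le, ?_⟩
  intro ε hε
  refine ⟨min (m / (2 * (C0 + 1))) (ε * m / (4 * (C0 + 1))),
    lt_min (by positivity) (by positivity), ?_⟩
  intro s t hst hh
  have hd0 : (0:ℝ) ≤ t - s := by linarith
  have hh1 : t - s ≤ m / (2 * (C0 + 1)) := le_trans hh (min_le_left _ _)
  have hh2 : t - s ≤ ε * m / (4 * (C0 + 1)) := le_trans hh (min_le_right _ _)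
  have hub := arc_upper s t hst
  have hlb := chord_lower s t hst
  have hm' : m ≤ ‖deriv γ s‖ := hmle s
  have hd1 : (C0 + 1) * (t - s) ≤ m / 2 := by
    calc (C0 + 1) * (t - s) ≤ (C0 + 1) * (m / (2 * (C0 + 1))) :=
        mul_le_mul_of_nonneg_left hh1 (by positivity)
      _ = m / 2 := by
        have h9 : (C0:ℝ) + 1 ≠ 0 := by positivity
        field_simp
  have hd2 : (C0 + 1) * (t - s) ≤ ε * m / 4 := by
    calc (C0 + 1) * (t - s) ≤ (C0 + 1) * (ε * m / (4 * (C0 + 1))) :=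
        mul_le_mul_of_nonneg_left hh2 (by positivity)
      _ = ε * m / 4 := by
        have h9 : (C0:ℝ) + 1 ≠ 0 := by positivity
        field_simp
  have e1 : (t - s) * m ≤ (t - s) * ‖deriv γ s‖ := mul_le_mul_of_nonneg_left hm' hd0
  have e3 : C0 * (t - s)^2 ≤ (C0 + 1) * (t - s)^2 := by nlinarith [sq_nonneg (t - s)]
  have e2 : (C0 + 1) * (t - s)^2 ≤ (m / 2) * (t - s) := by nlinarith [hd1, hd0]
  have h5 : (m / 2) * (t - s) ≤ ‖γ t - γ s‖ := by nlinarith [hlb, e1, e2, e3]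
  have h6 : arcl γ t - arcl γ s ≤ ‖γ t - γ s‖ + 2 * ((C0 + 1) * (t - s)^2) := by
    nlinarith [hub, hlb, e3]
  have e4 : (C0 + 1) * (t - s) * (t - s) ≤ ε * m / 4 * (t - s) :=
    mul_le_mul_of_nonneg_right hd2 hd0
  have h7 : 2 * ((C0 + 1) * (t - s)^2) ≤ ε * ((m / 2) * (t - s)) := by nlinarith [e4]
  have h8 : ε * ((m / 2) * (t - s)) ≤ ε * ‖γ t - γ s‖ := mul_le_mul_of_nonneg_left h5 hε.le
  linarith


lemma le_of_forall_one_add_mul' {a b : ℝ} (hb : 0 ≤ b) (h : ∀ ε : ℝ, 0 < ε → a ≤ (1 + ε) * b) :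
    a ≤ b := by
  by_contra hc
  push_neg at hc
  have hε : (0:ℝ) < (a - b) / (2 * (b + 1)) := div_pos (by linarith) (by linarith)
  have hle := h _ hε
  have hcancel : (a - b) / (2 * (b + 1)) * (2 * (b + 1)) = a - b :=
    div_mul_cancel₀ _ (by linarith)
  nlinarith [hcancel, mul_nonneg hε.le hb]

lemma length_lower_bound (Γ : Set E₂) (d : E₂ → E₂ → ℝ)
    (hd0 : ∀ x y, 0 ≤ d x y)
    (hself : ∀ x, d x x = 0)
    (htri : ∀ x ∈ Γ, ∀ y ∈ Γ, ∀ z ∈ Γ, d x z ≤ d x y + d y z)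
    (hloc : ∀ ε : ℝ, 0 < ε → ∃ δ : ℝ, 0 < δ ∧
      ∀ x ∈ Γ, ∀ y ∈ Γ, dist x y < δ → d x y ≤ (1 + ε) * dist x y) :
    ∀ x ∈ Γ, ∀ y ∈ Γ, ENNReal.ofReal (d x y) ≤ lengthMetricIn Γ x y := by
  intro x hx y hy
  rw [lengthMetricIn]
  refine le_iInf fun σ' => ?_
  obtain ⟨σ, hσc, hσm, hσ0, hσ1⟩ := σ'
  set V := eVariationOn σ (Set.Icc (0:ℝ) 1) with hV
  have main : ∀ ε : ℝ, 0 < ε → ENNReal.ofReal (d x y) ≤ ENNReal.ofReal (1 + ε) * V := by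
    intro ε hε
    obtain ⟨δ, hδ, hδp⟩ := hloc ε hε
    have huc : UniformContinuousOn σ (Set.Icc 0 1) :=
      isCompact_Icc.uniformContinuousOn_of_continuous hσc
    rw [Metric.uniformContinuousOn_iff] at huc
    obtain ⟨δ', hδ', hδ'p⟩ := huc δ hδ
    obtain ⟨N, hN⟩ := exists_nat_gt (1 / δ')
    have hN0 : 0 < N := by
      rcases Nat.eq_zero_or_pos N with rfl | h
      · exfalso
        simp only [Nat.cast_zero] at hN
        linarith [one_div_pos.mpr hδ']
      · exact h
    have hN0' : (0:ℝ) < (N:ℝ) := by exact_mod_cast hN0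
    set u : ℕ → ℝ := fun i => ((min i N : ℕ) : ℝ) / N with hu
    have humem : ∀ i, u i ∈ Set.Icc (0:ℝ) 1 := by
      intro i
      constructor
      · positivity
      · rw [div_le_one hN0']
        exact_mod_cast min_le_right i N
    have humono : Monotone u := by
      intro i j hij
      show ((min i N : ℕ):ℝ)/N ≤ ((min j N : ℕ):ℝ)/N
      have hmn : ((min i N : ℕ):ℝ) ≤ ((min j N : ℕ):ℝ) := Nat.cast_le.mpr (by omega)
      gcongr
    have hstep : ∀ i, dist (u (i+1)) (u i) < δ' := by
      intro i
      have h1 : (min (i+1) N : ℕ) ≤ (min i N : ℕ) + 1 := by omega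
      have h2 : (min i N : ℕ) ≤ (min (i+1) N : ℕ) := by omega
      have hmono' : u i ≤ u (i+1) := humono (Nat.le_succ i)
      rw [Real.dist_eq, abs_of_nonneg (sub_nonneg.mpr hmono')]
      have hle : u (i+1) - u i ≤ 1 / N := by
        show ((min (i+1) N : ℕ):ℝ)/N - ((min i N : ℕ):ℝ)/N ≤ 1/N
        rw [div_sub_div_same]
        gcongr
        have h1' : ((min (i+1) N : ℕ):ℝ) ≤ ((min i N : ℕ):ℝ) + 1 := by exact_mod_cast h1
        linarith
      have h3 : (1:ℝ)/N < δ' := by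
        rw [div_lt_iff₀ hN0']
        have h4 : 1/δ' * δ' < N * δ' := mul_lt_mul_of_pos_right hN hδ'
        rw [one_div_mul_cancel hδ'.ne'] at h4
        linarith
      linarith
    have hchain : ∀ n : ℕ, d (σ (u 0)) (σ (u n)) ≤
        ∑ i ∈ Finset.range n, d (σ (u i)) (σ (u (i+1))) := by
      intro n
      induction n with
      | zero => simp [hself]
      | succ n ihn =>
        rw [Finset.sum_range_succ]
        calc d (σ (u 0)) (σ (u (n+1)))
            ≤ d (σ (u 0)) (σ (u n)) + d (σ (u n)) (σ (u (n+1))) :=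
              htri _ (hσm (humem 0)) _ (hσm (humem n)) _ (hσm (humem (n+1)))
          _ ≤ _ := by linarith
    have hu0 : σ (u 0) = x := by
      rw [hu]; simp [hσ0]
    have huN : σ (u N) = y := by
      rw [hu]
      simp only [min_self]
      rw [div_self hN0'.ne']
      exact hσ1
    have hterm : ∀ i, d (σ (u i)) (σ (u (i+1))) ≤ (1+ε) * dist (σ (u i)) (σ (u (i+1))) := by
      intro i
      apply hδp _ (hσm (humem i)) _ (hσm (humem (i+1)))
      exact hδ'p _ (humem i) _ (humem (i+1)) (by rw [dist_comm]; exact hstep i)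
    have hsum : d x y ≤ (1+ε) * ∑ i ∈ Finset.range N, dist (σ (u i)) (σ (u (i+1))) := by
      rw [← hu0, ← huN]
      calc d (σ (u 0)) (σ (u N)) ≤ ∑ i ∈ Finset.range N, d (σ (u i)) (σ (u (i+1))) := hchain N
        _ ≤ ∑ i ∈ Finset.range N, (1+ε) * dist (σ (u i)) (σ (u (i+1))) :=
            Finset.sum_le_sum fun i _ => hterm i
        _ = _ := by rw [Finset.mul_sum]
    calc ENNReal.ofReal (d x y)
        ≤ ENNReal.ofReal ((1+ε) * ∑ i ∈ Finset.range N, dist (σ (u i)) (σ (u (i+1)))) :=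
          ENNReal.ofReal_le_ofReal hsum
      _ = ENNReal.ofReal (1+ε) * ENNReal.ofReal (∑ i ∈ Finset.range N, dist (σ (u i)) (σ (u (i+1)))) :=
          ENNReal.ofReal_mul (by linarith)
      _ = ENNReal.ofReal (1+ε) * ∑ i ∈ Finset.range N, ENNReal.ofReal (dist (σ (u i)) (σ (u (i+1)))) := by
          rw [ENNReal.ofReal_sum_of_nonneg (fun i _ => dist_nonneg)]
      _ = ENNReal.ofReal (1+ε) * ∑ i ∈ Finset.range N, edist (σ (u (i+1))) (σ (u i)) := by
          congr 1
          refine Finset.sum_congr rfl fun i _ => ?_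
          rw [edist_dist, dist_comm]
      _ ≤ ENNReal.ofReal (1+ε) * V :=
          mul_le_mul_right (eVariationOn.sum_le (f := σ) (n := N) humono humem) _
  rcases eq_or_ne V ⊤ with hT | hT
  · exact le_of_le_of_eq le_top (hT ▸ rfl)
  · have hd : d x y ≤ V.toReal := by
      apply le_of_forall_one_add_mul' ENNReal.toReal_nonneg
      intro ε hε
      have h1 := main ε hε
      have h2 : (ENNReal.ofReal (1+ε) * V).toReal = (1+ε) * V.toReal := by
        rw [ENNReal.toReal_mul, ENNReal.toReal_ofReal (by linarith)]
      have h3 := ENNReal.toReal_mono (by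
        exact ENNReal.mul_ne_top ENNReal.ofReal_ne_top hT) h1
      rwa [ENNReal.toReal_ofReal (hd0 x y), h2] at h3
    exact ENNReal.ofReal_le_of_le_toReal hd


lemma close_params {γ : ℝ → E₂} (hcont : Continuous γ) (hper : Function.Periodic γ 1)
    (hinj : Set.InjOn γ (Set.Ico 0 1)) :
    ∀ η : ℝ, 0 < η → ∃ δ : ℝ, 0 < δ ∧ ∀ s ∈ Set.Ico (0:ℝ) 1, ∀ t ∈ Set.Ico (0:ℝ) 1,
      ‖γ s - γ t‖ < δ → min |s - t| (1 - |s - t|) ≤ η := by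
  intro η hη
  set K := (Set.Icc (0:ℝ) 1 ×ˢ Set.Icc (0:ℝ) 1) ∩
    {p : ℝ × ℝ | η ≤ min |p.1 - p.2| (1 - |p.1 - p.2|)} with hK
  have hKc : IsCompact K := by
    apply (isCompact_Icc.prod isCompact_Icc).inter_right
    exact isClosed_le continuous_const
      (((continuous_fst.sub continuous_snd).abs).min
        (continuous_const.sub (continuous_fst.sub continuous_snd).abs))
  rcases K.eq_empty_or_nonempty with hKe | hKn
  · refine ⟨1, one_pos, fun s hs t ht _ => ?_⟩
    by_contra hcon
    push_neg at hcon
    have hm : (s, t) ∈ K :=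
      ⟨⟨Set.Ico_subset_Icc_self hs, Set.Ico_subset_Icc_self ht⟩, hcon.le⟩
    rw [hKe] at hm
    exact hm
  · obtain ⟨p₀, hp₀K, hmin⟩ := hKc.exists_isMinOn hKn
      (Continuous.continuousOn
        (((hcont.comp continuous_fst).sub (hcont.comp continuous_snd)).norm))
    obtain ⟨⟨h1, h2⟩, h3⟩ := hp₀K
    refine ⟨‖γ p₀.1 - γ p₀.2‖, ?_, ?_⟩
    · rw [norm_pos_iff, sub_ne_zero]
      intro heq
      have hs' : (if p₀.1 = 1 then (0:ℝ) else p₀.1) ∈ Set.Ico (0:ℝ) 1 := by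
        split_ifs with h
        · constructor <;> norm_num
        · exact ⟨h1.1, lt_of_le_of_ne h1.2 h⟩
      have ht' : (if p₀.2 = 1 then (0:ℝ) else p₀.2) ∈ Set.Ico (0:ℝ) 1 := by
        split_ifs with h
        · constructor <;> norm_num
        · exact ⟨h2.1, lt_of_le_of_ne h2.2 h⟩
      have hγs : γ (if p₀.1 = 1 then (0:ℝ) else p₀.1) = γ p₀.1 := by
        split_ifs with h
        · rw [h]
          have h0 := hper 0
          rw [zero_add] at h0
          exact h0.symm
        · rfl
      have hγt : γ (if p₀.2 = 1 then (0:ℝ) else p₀.2) = γ p₀.2 := by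
        split_ifs with h
        · rw [h]
          have h0 := hper 0
          rw [zero_add] at h0
          exact h0.symm
        · rfl
      have heq' := hinj hs' ht' (by rw [hγs, hγt]; exact heq)
      have key : min |p₀.1 - p₀.2| (1 - |p₀.1 - p₀.2|) ≤ 0 := by
        by_cases hse : p₀.1 = 1 <;> by_cases hte : p₀.2 = 1 <;>
          simp only [hse, hte, if_pos, if_neg, ite_true, ite_false] at heq'
        · rw [hse, hte]
          norm_num
        · rw [hse, ← heq']
          norm_num
        · rw [hte, heq']
          norm_num
        · rw [heq']
          norm_num
      simp only [Set.mem_setOf_eq] at h3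
      linarith
    · intro s hs t ht hlt
      by_contra hcon
      push_neg at hcon
      have hmem : (s, t) ∈ K :=
        ⟨⟨Set.Ico_subset_Icc_self hs, Set.Ico_subset_Icc_self ht⟩, hcon.le⟩
      exact absurd (lt_of_le_of_lt (hmin hmem) hlt) (lt_irrefl _)


/-- The piecewise geodesic interpolation along the real line with break points `T'`. -/
lemma construction {X : Type u} [MetricSpace X] (hX : IsGeodesicSpace X)
    (T' : Set ℝ) (hT'fin : ∀ a b : ℝ, (T' ∩ Set.Icc a b).Finite)
    (hwin : ∀ s : ℝ, (T' ∩ Set.Ioc (s-1) s).Nonempty)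
    (hwin2 : ∀ s : ℝ, (T' ∩ Set.Ico s (s+1)).Nonempty)
    (hT'z : ∀ t ∈ T', t + 1 ∈ T' ∧ t - 1 ∈ T')
    (l : ℝ → ℝ) (lmono : ∀ s t : ℝ, s ≤ t → l s ≤ l t)
    (lstrict : ∀ s t : ℝ, s < t → l s < l t)
    (L : ℝ) (hlL : ∀ t : ℝ, l (t + 1) = l t + L)
    {lam : ℝ} (hlam : 0 ≤ lam)
    (f : ℝ → X) (hfper : ∀ t : ℝ, f (t + 1) = f t)
    (hf : ∀ s t : ℝ, s ∈ T' → t ∈ T' → s ≤ t → dist (f s) (f t) ≤ lam * (l t - l s)) :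
    ∃ ψ : ℝ → X, (∀ t ∈ T', ψ t = f t) ∧
      (∀ s t : ℝ, s ≤ t → dist (ψ s) (ψ t) ≤ lam * l t - lam * l s) ∧
      (∀ s : ℝ, ψ (s + 1) = ψ s) ∧
      (∀ s : ℝ, ∃ a ∈ T', ∃ b ∈ T',
        dist (f a) (ψ s) + dist (ψ s) (f b) = dist (f a) (f b)) := by
  classical
  choose geod hg0 hg1 hgiso using hX
  have hfinIoc : ∀ s : ℝ, (T' ∩ Set.Ioc (s-1) s).Finite :=
    fun s => (hT'fin (s-1) s).subset (inter_subset_inter_right _ Set.Ioc_subset_Icc_self)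
  have hfinIco : ∀ s : ℝ, (T' ∩ Set.Ico s (s+1)).Finite :=
    fun s => (hT'fin s (s+1)).subset (inter_subset_inter_right _ Set.Ico_subset_Icc_self)
  set u : ℝ → ℝ := fun s => sSup (T' ∩ Set.Ioc (s-1) s) with hu_def
  set v : ℝ → ℝ := fun s => sInf (T' ∩ Set.Ico s (s+1)) with hv_def
  have humem : ∀ s, u s ∈ T' ∩ Set.Ioc (s-1) s :=
    fun s => Set.Nonempty.csSup_mem (hwin s) (hfinIoc s)
  have hvmem : ∀ s, v s ∈ T' ∩ Set.Ico s (s+1) :=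
    fun s => Set.Nonempty.csInf_mem (hwin2 s) (hfinIco s)
  have huT : ∀ s, u s ∈ T' := fun s => (humem s).1
  have hvT : ∀ s, v s ∈ T' := fun s => (hvmem s).1
  have hule : ∀ s, u s ≤ s := fun s => (humem s).2.2
  have hvge : ∀ s, s ≤ v s := fun s => (hvmem s).2.1
  have huv : ∀ s, u s ≤ v s := fun s => (hule s).trans (hvge s)
  have humax : ∀ s t, t ∈ T' → t ≤ s → t ≤ u s := by
    intro s t ht hts
    rcases le_or_gt t (s-1) with h | h
    · linarith [(humem s).2.1]
    · exact le_csSup (hfinIoc s).bddAbove ⟨ht, h, hts⟩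
  have hvmin : ∀ s t, t ∈ T' → s ≤ t → v s ≤ t := by
    intro s t ht hst
    rcases lt_or_ge t (s+1) with h | h
    · exact csInf_le (hfinIco s).bddBelow ⟨ht, hst, h⟩
    · linarith [(hvmem s).2.2]
  have huself : ∀ s, s ∈ T' → u s = s := fun s hs => le_antisymm (hule s) (humax s s hs le_rfl)
  have hvself : ∀ s, s ∈ T' → v s = s := fun s hs => le_antisymm (hvmin s s hs le_rfl) (hvge s)
  have hu1 : ∀ s, u (s+1) = u s + 1 := by
    intro s
    apply le_antisymm
    · have h1 : u (s+1) - 1 ∈ T' := (hT'z _ (huT (s+1))).2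
      have h2 : u (s+1) - 1 ≤ s := by linarith [hule (s+1)]
      linarith [humax s _ h1 h2]
    · have h1 : u s + 1 ∈ T' := (hT'z _ (huT s)).1
      exact humax (s+1) _ h1 (by linarith [hule s])
  have hv1 : ∀ s, v (s+1) = v s + 1 := by
    intro s
    apply le_antisymm
    · have h1 : v s + 1 ∈ T' := (hT'z _ (hvT s)).1
      exact hvmin (s+1) _ h1 (by linarith [hvge s])
    · have h1 : v (s+1) - 1 ∈ T' := (hT'z _ (hvT (s+1))).2
      have h2 : s ≤ v (s+1) - 1 := by linarith [hvge (s+1)]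
      linarith [hvmin s _ h1 h2]
  set D : ℝ → ℝ := fun s => dist (f (u s)) (f (v s)) with hD_def
  set r : ℝ → ℝ := fun s => (l s - l (u s)) / (l (v s) - l (u s)) * D s with hr_def
  set ψ : ℝ → X := fun s => geod (f (u s)) (f (v s)) (r s) with hψ_def
  have hD0 : ∀ s, 0 ≤ D s := fun s => dist_nonneg
  have hDle : ∀ s, D s ≤ lam * (l (v s) - l (u s)) := fun s => hf _ _ (huT s) (hvT s) (huv s)
  have hrange : ∀ s, 0 ≤ r s ∧ r s ≤ D s := by
    intro s
    rcases eq_or_lt_of_le (huv s) with he | hlt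
    · have hus : u s = s := le_antisymm (hule s) (he ▸ hvge s)
      have hnum : l s - l (u s) = 0 := by rw [hus]; ring
      constructor
      · simp only [hr_def, hnum, zero_div, zero_mul, le_refl]
      · simp only [hr_def, hnum, zero_div, zero_mul]
        exact hD0 s
    · have hden : 0 < l (v s) - l (u s) := by linarith [lstrict _ _ hlt]
      have hnum0 : 0 ≤ l s - l (u s) := by linarith [lmono _ _ (hule s)]
      have hnum1 : l s - l (u s) ≤ l (v s) - l (u s) := by linarith [lmono _ _ (hvge s)]
      constructor
      · exact mul_nonneg (div_nonneg hnum0 hden.le) (hD0 s)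
      · have hh1 : r s ≤ 1 * D s := by
          simp only [hr_def]
          exact mul_le_mul_of_nonneg_right ((div_le_one hden).mpr hnum1) (hD0 s)
        linarith
  have hrmem : ∀ s, r s ∈ Set.Icc 0 (D s) := fun s => ⟨(hrange s).1, (hrange s).2⟩
  have hψT : ∀ t ∈ T', ψ t = f t := by
    intro t ht
    have h1 : r t = 0 := by
      simp only [hr_def, huself t ht, sub_self, zero_div, zero_mul]
    simp only [hψ_def, h1, hg0, huself t ht]
  have hbase : ∀ s t : ℝ, s ≤ t → T' ∩ Set.Ioo s t = ∅ →
      dist (ψ s) (ψ t) ≤ lam * l t - lam * l s := by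
    intro s t hst hmid
    rcases eq_or_lt_of_le hst with rfl | hlt
    · simp
    have hnm : ∀ w, w ∈ T' → w ≤ s ∨ t ≤ w := by
      intro w hw
      by_contra hcon
      push_neg at hcon
      have hmem : w ∈ T' ∩ Set.Ioo s t := ⟨hw, hcon.1, hcon.2⟩
      rw [hmid] at hmem
      exact hmem
    by_cases htT : t ∈ T'
    · by_cases hsT : s ∈ T'
      · rw [hψT s hsT, hψT t htT]
        calc dist (f s) (f t) ≤ lam * (l t - l s) := hf s t hsT htT hst
          _ = lam * l t - lam * l s := by ring
      · -- s not in T', t in T' : v s = t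
        have hvs : v s = t := by
          apply le_antisymm (hvmin s t htT hst)
          rcases hnm (v s) (hvT s) with h | h
          · exfalso
            have he : s = v s := le_antisymm (hvge s) h
            exact hsT (he ▸ hvT s)
          · exact h
        have hus : u s < s := lt_of_le_of_ne (hule s) (fun he => hsT (he ▸ huT s))
        have hden : 0 < l (v s) - l (u s) :=
          sub_pos.mpr (lstrict _ _ (lt_of_lt_of_le hus (hvge s)))
        have e : dist (ψ s) (ψ t) = |r s - D s| := by
          have h := hgiso (f (u s)) (f (v s)) (r s) (hrmem s) (D s) ⟨hD0 s, le_refl _⟩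
          rw [show geod (f (u s)) (f (v s)) (D s) = f (v s) from hg1 _ _] at h
          rw [hψT t htT, ← hvs]
          exact h
        rw [e]
        have hDeq : (l (v s) - l (u s)) / (l (v s) - l (u s)) * D s = D s := by
          rw [div_self hden.ne']; ring
        calc |r s - D s|
            = |(l s - l (u s)) / (l (v s) - l (u s)) * D s
              - (l (v s) - l (u s)) / (l (v s) - l (u s)) * D s| := by
              rw [hDeq]
          _ ≤ lam * (l (v s) - l s) :=
              ratio_abs_le (lmono _ _ (hule s)) (lmono _ _ (hvge s)) le_rfl
                (by linarith) (hD0 s) (hDle s)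
          _ = lam * l t - lam * l s := by rw [hvs]; ring
    · -- t not in T'
      have hut : u t ≤ s := by
        rcases hnm (u t) (huT t) with h | h
        · exact h
        · exfalso
          have he : u t = t := le_antisymm (hule t) h
          exact htT (he ▸ huT t)
      have huu : u t = u s :=
        le_antisymm (humax s _ (huT t) hut) (humax t _ (huT s) ((hule s).trans hst))
      have hvt : t < v t := lt_of_le_of_ne (hvge t) (fun he => htT (he ▸ hvT t))
      by_cases hsT : s ∈ T'
      · -- u t = s
        have hus' : u t = s := by rw [huu, huself s hsT]
        have hden : 0 < l (v t) - l (u t) := by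
          have h9 : u t < v t := by rw [hus']; linarith
          exact sub_pos.mpr (lstrict _ _ h9)
        have e : dist (ψ s) (ψ t) = |0 - r t| := by
          have h := hgiso (f (u t)) (f (v t)) 0 ⟨le_refl _, hD0 t⟩ (r t) (hrmem t)
          rw [show geod (f (u t)) (f (v t)) 0 = f (u t) from hg0 _ _] at h
          rw [hψT s hsT, ← hus']
          exact h
        rw [e]
        have h0eq : (l (u t) - l (u t)) / (l (v t) - l (u t)) * D t = 0 := by
          rw [sub_self, zero_div, zero_mul]
        calc |0 - r t|
            = |(l (u t) - l (u t)) / (l (v t) - l (u t)) * D t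
              - (l t - l (u t)) / (l (v t) - l (u t)) * D t| := by
              rw [h0eq]
          _ ≤ lam * (l t - l (u t)) :=
              ratio_abs_le le_rfl (lmono _ _ (hule t)) (lmono _ _ (hvge t))
                (by linarith) (hD0 t) (hDle t)
          _ = lam * l t - lam * l s := by rw [hus']; ring
      · -- neither endpoint in T'
        have hvs_gt : s < v s := lt_of_le_of_ne (hvge s) (fun he => hsT (he ▸ hvT s))
        have hvv : v s = v t := by
          apply le_antisymm
          · exact hvmin s _ (hvT t) (hst.trans (hvge t))
          · rcases hnm (v s) (hvT s) with h | h
            · exfalso; linarith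
            · exact hvmin t _ (hvT s) h
        have hus : u s < s := lt_of_le_of_ne (hule s) (fun he => hsT (he ▸ huT s))
        have hden : 0 < l (v s) - l (u s) :=
          sub_pos.mpr (lstrict _ _ (lt_of_lt_of_le hus (hvge s)))
        have hDt : D t = D s := by
          simp only [hD_def, huu, hvv]
        have hrt : r t = (l t - l (u s)) / (l (v s) - l (u s)) * D s := by
          simp only [hr_def, huu, hvv, hDt]
        have e : dist (ψ s) (ψ t) = |r s - r t| := by
          have hmem' : r t ∈ Set.Icc 0 (D s) := by
            rw [← hDt]; exact hrmem t
          have h := hgiso (f (u s)) (f (v s)) (r s) (hrmem s) (r t) hmem'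
          simp only [hψ_def, huu, ← hvv]
          exact h
        rw [e, hrt]
        simp only [hr_def]
        calc |(l s - l (u s)) / (l (v s) - l (u s)) * D s
            - (l t - l (u s)) / (l (v s) - l (u s)) * D s|
            ≤ lam * (l t - l s) :=
              ratio_abs_le (lmono _ _ (hule s)) (lmono _ _ hst)
                (lmono _ _ (by linarith [hvv ▸ hvge t] : t ≤ v s))
                (by linarith) (hD0 s) (hDle s)
          _ = lam * l t - lam * l s := by ring
  have hlip : ∀ s t : ℝ, s ≤ t → dist (ψ s) (ψ t) ≤ lam * l t - lam * l s :=
    lip_of_base (F := fun w => lam * l w) hT'fin hbase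
  have hψper : ∀ s : ℝ, ψ (s + 1) = ψ s := by
    intro s
    have hr1 : r (s + 1) = r s := by
      simp only [hr_def, hu1, hv1, hD_def, hlL, hfper]
      ring_nf
    simp only [hψ_def, hu1, hv1, hfper, hr1]
  have hbtw : ∀ s : ℝ, ∃ a ∈ T', ∃ b ∈ T',
      dist (f a) (ψ s) + dist (ψ s) (f b) = dist (f a) (f b) := by
    intro s
    refine ⟨u s, huT s, v s, hvT s, ?_⟩
    have h1 : dist (f (u s)) (ψ s) = |0 - r s| := by
      have h := hgiso (f (u s)) (f (v s)) 0 ⟨le_refl _, hD0 s⟩ (r s) (hrmem s)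
      rw [show geod (f (u s)) (f (v s)) 0 = f (u s) from hg0 _ _] at h
      exact h
    have h2 : dist (ψ s) (f (v s)) = |r s - D s| := by
      have h := hgiso (f (u s)) (f (v s)) (r s) (hrmem s) (D s) ⟨hD0 s, le_refl _⟩
      rw [show geod (f (u s)) (f (v s)) (D s) = f (v s) from hg1 _ _] at h
      exact h
    rw [h1, h2, abs_of_nonpos (by linarith [(hrange s).1]),
      abs_of_nonpos (by linarith [(hrange s).2])]
    show -(0 - r s) + -(r s - D s) = dist (f (u s)) (f (v s))
    have : D s = dist (f (u s)) (f (v s)) := rfl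
    linarith [this]
  exact ⟨ψ, hψT, hlip, hψper, hbtw⟩


end Stmt0Aux
open Stmt0Aux in
theorem stmt_0 (Γ : Set E₂)
    (hsmooth : ∃ γ : ℝ → E₂, ContDiff ℝ (⊤ : ℕ∞) γ ∧ Function.Periodic γ 1 ∧
      Set.InjOn γ (Set.Ico 0 1) ∧ (∀ t, deriv γ t ≠ 0) ∧ Set.range γ = Γ) :
    ∃ ν : ℝ, 0 < ν ∧
      ∀ (X : Type u) [MetricSpace X], IsGeodesicSpace X →
        ∀ A : Finset E₂, ↑A ⊆ Γ → (∀ y ∈ Γ, ∃ a ∈ A, dist y a ≤ ν) →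
          ∀ lam : ℝ, 0 ≤ lam →
            ∀ φ : E₂ → X, (∀ a ∈ A, ∀ b ∈ A, dist (φ a) (φ b) ≤ lam * dist a b) →
              ∃ φbar : E₂ → X,
                (∀ a ∈ A, φbar a = φ a) ∧
                (∀ x ∈ Γ, ∃ a ∈ A, ∃ b ∈ A,
                  dist (φ a) (φbar x) + dist (φbar x) (φ b) = dist (φ a) (φ b)) ∧
                (∀ x ∈ Γ, ∀ y ∈ Γ, ENNReal.ofReal (dist (φbar x) (φbar y))
                  ≤ ENNReal.ofReal lam * lengthMetricIn Γ x y) ∧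
                (∀ x ∈ Γ, ∀ y ∈ Γ, dist (φbar x) (φbar y) ≤ 3 * lam * dist x y) := by
  classical
  obtain ⟨γ, hγ, hper, hinj, hder, hrangeΓ⟩ := hsmooth
  obtain ⟨m, hm, hml, hl1, chord_le, chordarc⟩ := curve_facts hγ hper hder
  have hγc : Continuous γ := hγ.continuous
  have lmono : ∀ s t : ℝ, s ≤ t → arcl γ s ≤ arcl γ t := by
    intro s t h
    nlinarith [hml s t h, hm]
  have lstrict : ∀ s t : ℝ, s < t → arcl γ s < arcl γ t := by
    intro s t h
    nlinarith [hml s t h.le, hm]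
  set L := arcl γ 1 with hLdef
  have hL0 : arcl γ 0 = 0 := intervalIntegral.integral_same
  have hLpos : 0 < L := by
    have h9 := hml 0 1 (by norm_num)
    rw [hL0] at h9
    nlinarith
  have hperZ : ∀ (t : ℝ) (k : ℤ), γ (t + k) = γ t := by
    intro t k
    have h := hper.sub_int_mul_eq (x := t + k) (n := k)
    rw [mul_one] at h
    rw [add_sub_cancel_right] at h
    exact h.symm
  have hγΓ : ∀ t : ℝ, γ t ∈ Γ := fun t => hrangeΓ ▸ Set.mem_range_self t
  have hfract : ∀ t : ℝ, γ (Int.fract t) = γ t := by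
    intro t
    rw [← Int.self_sub_floor]
    have h9 := hperZ (t - ⌊t⌋) ⌊t⌋
    rw [sub_add_cancel] at h9
    exact h9.symm
  have hΓex : ∀ x, x ∈ Γ → ∃ s, s ∈ Set.Ico (0:ℝ) 1 ∧ γ s = x := by
    intro x hx
    rw [← hrangeΓ] at hx
    obtain ⟨t, ht⟩ := hx
    exact ⟨Int.fract t, ⟨Int.fract_nonneg t, Int.fract_lt_one t⟩, by rw [hfract t, ht]⟩
  set par : E₂ → ℝ := fun x => if h : x ∈ Γ then (hΓex x h).choose else 0 with hpar_def
  have hparIco : ∀ x ∈ Γ, par x ∈ Set.Ico (0:ℝ) 1 := by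
    intro x hx
    simp only [hpar_def, dif_pos hx]
    exact (hΓex x hx).choose_spec.1
  have hparγ : ∀ x ∈ Γ, γ (par x) = x := by
    intro x hx
    simp only [hpar_def, dif_pos hx]
    exact (hΓex x hx).choose_spec.2
  have hpar_uniq : ∀ x ∈ Γ, ∀ s ∈ Set.Ico (0:ℝ) 1, γ s = x → s = par x := by
    intro x hx s hs hsx
    exact hinj hs (hparIco x hx) (by rw [hsx, hparγ x hx])
  -- local (1+ε)-bound for the circle distance of arc-length parameters
  have hcdloc : ∀ ε : ℝ, 0 < ε → ∃ δ : ℝ, 0 < δ ∧ ∀ x ∈ Γ, ∀ y ∈ Γ, dist x y < δ →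
      cd L (arcl γ (par x) - arcl γ (par y)) ≤ (1 + ε) * dist x y := by
    intro ε hε
    obtain ⟨h, hh, hch⟩ := chordarc ε hε
    obtain ⟨δ, hδ, hcp⟩ := close_params hγc hper hinj (min h (1/3))
      (lt_min hh (by norm_num))
    refine ⟨δ, hδ, ?_⟩
    have main : ∀ x ∈ Γ, ∀ y ∈ Γ, par x ≤ par y → dist x y < δ →
        cd L (arcl γ (par x) - arcl γ (par y)) ≤ (1 + ε) * dist x y := by
      intro x hx y hy hst hdxy
      have hsm := hparIco x hx
      have htm := hparIco y hy
      have hnorm : ‖γ (par x) - γ (par y)‖ = dist x y := by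
        rw [hparγ x hx, hparγ y hy, ← dist_eq_norm]
      have hmin := hcp (par x) hsm (par y) htm (by rw [hnorm]; exact hdxy)
      have habs : |par x - par y| = par y - par x := by
        rw [abs_sub_comm, abs_of_nonneg (by linarith)]
      rw [habs] at hmin
      rcases min_le_iff.mp hmin with hc | hc
      · have h1 : par y - par x ≤ h := le_trans hc (min_le_left _ _)
        have h2 := hch (par x) (par y) hst (by linarith)
        have h3 : 0 ≤ arcl γ (par y) - arcl γ (par x) := by linarith [lmono _ _ hst]
        calc cd L (arcl γ (par x) - arcl γ (par y))
            = cd L (-(arcl γ (par y) - arcl γ (par x))) := by rw [neg_sub]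
          _ = cd L (arcl γ (par y) - arcl γ (par x)) := cd_neg _ _
          _ ≤ |arcl γ (par y) - arcl γ (par x)| := cd_le_abs _ _
          _ = arcl γ (par y) - arcl γ (par x) := abs_of_nonneg h3
          _ ≤ (1+ε) * ‖γ (par y) - γ (par x)‖ := h2
          _ = (1+ε) * dist x y := by rw [norm_sub_rev, hnorm]
      · have h1 : (par x + 1) - par y ≤ h := by
          have h1' : 1 - (par y - par x) ≤ h := le_trans hc (min_le_left _ _)
          linarith
        have hty : par y ≤ par x + 1 := by linarith [htm.2, hsm.1]
        have h2 := hch (par y) (par x + 1) hty (by linarith)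
        have h3 : 0 ≤ arcl γ (par x + 1) - arcl γ (par y) := by linarith [lmono _ _ hty]
        have h4 : γ (par x + 1) = γ (par x) := hper (par x)
        calc cd L (arcl γ (par x) - arcl γ (par y))
            = cd L ((arcl γ (par x + 1) - arcl γ (par y)) + (-1 : ℤ) * L) := by
              rw [hl1 (par x)]
              push_cast
              ring_nf
          _ = cd L (arcl γ (par x + 1) - arcl γ (par y)) := cd_add_int_mul L _ (-1)
          _ ≤ |arcl γ (par x + 1) - arcl γ (par y)| := cd_le_abs _ _
          _ = arcl γ (par x + 1) - arcl γ (par y) := abs_of_nonneg h3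
          _ ≤ (1+ε) * ‖γ (par x + 1) - γ (par y)‖ := h2
          _ = (1+ε) * dist x y := by rw [h4, hnorm]
    intro x hx y hy hdxy
    rcases le_total (par x) (par y) with hc | hc
    · exact main x hx y hy hc hdxy
    · have h5 := main y hy x hx hc (by rwa [dist_comm])
      calc cd L (arcl γ (par x) - arcl γ (par y))
          = cd L (-(arcl γ (par y) - arcl γ (par x))) := by rw [neg_sub]
        _ = cd L (arcl γ (par y) - arcl γ (par x)) := cd_neg _ _
        _ ≤ (1+ε) * dist y x := h5
        _ = (1+ε) * dist x y := by rw [dist_comm]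
  obtain ⟨δ₁, hδ₁, hδ₁p⟩ := hcdloc 1 one_pos
  refine ⟨δ₁ / 8, by positivity, ?_⟩
  intro X _ hX A hA hdense lam hlam φ hφ
  obtain ⟨a₀, ha₀, _⟩ := hdense (γ 0) (hγΓ 0)
  set T' : Set ℝ := γ ⁻¹' (↑A : Set E₂) with hT'def
  have hT'A : ∀ t ∈ T', γ t ∈ A := fun t ht => ht
  have hT'z : ∀ t ∈ T', t + 1 ∈ T' ∧ t - 1 ∈ T' := by
    intro t ht
    constructor
    · show γ (t+1) ∈ (↑A : Set E₂)
      rw [hper t]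
      exact ht
    · show γ (t-1) ∈ (↑A : Set E₂)
      have h9 := hper (t-1)
      rw [sub_add_cancel] at h9
      rw [← h9]
      exact ht
  have hT'param : ∀ t ∈ T', Int.fract t ∈ par '' (↑A : Set E₂) := by
    intro t ht
    refine ⟨γ t, hT'A t ht, ?_⟩
    exact (hpar_uniq (γ t) (hγΓ t) (Int.fract t)
      ⟨Int.fract_nonneg t, Int.fract_lt_one t⟩ (hfract t)).symm
  have hT'fin : ∀ a b : ℝ, (T' ∩ Set.Icc a b).Finite := by
    intro a b
    apply Set.Finite.subset (Set.Finite.image (fun p : ℝ × ℤ => p.1 + (p.2 : ℝ))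
      (Set.Finite.prod ((A.finite_toSet).image par) (Set.finite_Icc (⌊a⌋) (⌊b⌋))))
    rintro t ⟨ht, hta, htb⟩
    refine ⟨(Int.fract t, ⌊t⌋), ⟨hT'param t ht, ?_, ?_⟩, ?_⟩
    · exact Int.floor_le_floor hta
    · exact Int.floor_le_floor htb
    · exact Int.fract_add_floor t
  have hwin : ∀ s : ℝ, (T' ∩ Set.Ioc (s-1) s).Nonempty := by
    intro s
    refine ⟨par a₀ + ⌊s - par a₀⌋, ?_, ?_, ?_⟩
    · show γ _ ∈ (↑A : Set E₂)
      rw [hperZ (par a₀) ⌊s - par a₀⌋, hparγ a₀ (hA ha₀)]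
      exact ha₀
    · have h9 := Int.sub_one_lt_floor (s - par a₀)
      linarith
    · have h9 := Int.floor_le (s - par a₀)
      linarith
  have hwin2 : ∀ s : ℝ, (T' ∩ Set.Ico s (s+1)).Nonempty := by
    intro s
    obtain ⟨w, hwT, hw1, hw2⟩ := hwin (s+1)
    rcases lt_or_eq_of_le hw2 with hlt | heq
    · exact ⟨w, hwT, by linarith, hlt⟩
    · exact ⟨w - 1, (hT'z w hwT).2, by linarith, by linarith⟩
  have hf : ∀ s t : ℝ, s ∈ T' → t ∈ T' → s ≤ t →
      dist (φ (γ s)) (φ (γ t)) ≤ lam * (arcl γ t - arcl γ s) := by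
    intro s t hs ht hst
    calc dist (φ (γ s)) (φ (γ t)) ≤ lam * dist (γ s) (γ t) :=
        hφ _ (hT'A s hs) _ (hT'A t ht)
      _ ≤ lam * (arcl γ t - arcl γ s) := by
          apply mul_le_mul_of_nonneg_left ?_ hlam
          rw [dist_eq_norm, norm_sub_rev]
          exact chord_le s t hst
  obtain ⟨ψ, hψT, hψlip, hψper, hψbtw⟩ := construction hX T' hT'fin hwin hwin2 hT'z
    (arcl γ) lmono lstrict L hl1 hlam (fun t => φ (γ t))
    (fun t => congrArg φ (hper t)) hf
  set φbar : E₂ → X := fun x => ψ (par x) with hφbar_def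
  have hparT : ∀ a ∈ A, par a ∈ T' := by
    intro a ha
    show γ (par a) ∈ (↑A : Set E₂)
    rw [hparγ a (hA ha)]
    exact ha
  have prop1 : ∀ a ∈ A, φbar a = φ a := by
    intro a ha
    show ψ (par a) = φ a
    rw [hψT (par a) (hparT a ha), hparγ a (hA ha)]
  have mainbd : ∀ x ∈ Γ, ∀ y ∈ Γ, dist (φbar x) (φbar y) ≤
      lam * cd L (arcl γ (par x) - arcl γ (par y)) := by
    have main : ∀ x ∈ Γ, ∀ y ∈ Γ, par x ≤ par y → dist (φbar x) (φbar y) ≤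
        lam * cd L (arcl γ (par x) - arcl γ (par y)) := by
      intro x hx y hy hst
      have hz0 : 0 ≤ arcl γ (par y) - arcl γ (par x) := by linarith [lmono _ _ hst]
      have hxy1 : par y ≤ par x + 1 := by
        linarith [(hparIco y hy).2, (hparIco x hx).1]
      have hzL : arcl γ (par y) - arcl γ (par x) ≤ L := by
        have h9 := lmono _ _ hxy1
        rw [hl1 (par x)] at h9
        linarith
      have hd1 : dist (ψ (par x)) (ψ (par y)) ≤ lam * (arcl γ (par y) - arcl γ (par x)) := by
        have h9 := hψlip (par x) (par y) hst
        linarith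
      have hd2 : dist (ψ (par x)) (ψ (par y)) ≤
          lam * (L - (arcl γ (par y) - arcl γ (par x))) := by
        have h9 := hψlip (par y) (par x + 1) hxy1
        rw [hψper (par x)] at h9
        rw [dist_comm] at h9
        have h10 : lam * arcl γ (par x + 1) = lam * (arcl γ (par x) + L) := by
          rw [hl1 (par x)]
        linarith
      have hcdge := cd_ge_min hLpos hz0 hzL
      have hcdneg : cd L (arcl γ (par x) - arcl γ (par y)) =
          cd L (arcl γ (par y) - arcl γ (par x)) := by
        rw [show arcl γ (par x) - arcl γ (par y)
          = -(arcl γ (par y) - arcl γ (par x)) by ring, cd_neg]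
      rw [hcdneg]
      rcases le_total (arcl γ (par y) - arcl γ (par x))
          (L - (arcl γ (par y) - arcl γ (par x))) with hc | hc
      · have h11 : arcl γ (par y) - arcl γ (par x) ≤
            cd L (arcl γ (par y) - arcl γ (par x)) := by
          rw [min_eq_left hc] at hcdge
          exact hcdge
        calc dist (φbar x) (φbar y) ≤ lam * (arcl γ (par y) - arcl γ (par x)) := hd1
          _ ≤ lam * cd L (arcl γ (par y) - arcl γ (par x)) :=
            mul_le_mul_of_nonneg_left h11 hlam
      · have h11 : L - (arcl γ (par y) - arcl γ (par x)) ≤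
            cd L (arcl γ (par y) - arcl γ (par x)) := by
          rw [min_eq_right hc] at hcdge
          exact hcdge
        calc dist (φbar x) (φbar y)
            ≤ lam * (L - (arcl γ (par y) - arcl γ (par x))) := hd2
          _ ≤ lam * cd L (arcl γ (par y) - arcl γ (par x)) :=
            mul_le_mul_of_nonneg_left h11 hlam
    intro x hx y hy
    rcases le_total (par x) (par y) with hc | hc
    · exact main x hx y hy hc
    · have h5 := main y hy x hx hc
      rw [dist_comm] at h5
      calc dist (φbar x) (φbar y) ≤ lam * cd L (arcl γ (par y) - arcl γ (par x)) := h5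
        _ = lam * cd L (arcl γ (par x) - arcl γ (par y)) := by
            rw [show arcl γ (par y) - arcl γ (par x)
              = -(arcl γ (par x) - arcl γ (par y)) by ring, cd_neg]
  have prop2 : ∀ x ∈ Γ, ∃ a ∈ A, ∃ b ∈ A,
      dist (φ a) (φbar x) + dist (φbar x) (φ b) = dist (φ a) (φ b) := by
    intro x hx
    obtain ⟨a', ha', b', hb', heq⟩ := hψbtw (par x)
    exact ⟨γ a', hT'A a' ha', γ b', hT'A b' hb', heq⟩
  have prop3 : ∀ x ∈ Γ, ∀ y ∈ Γ, ENNReal.ofReal (dist (φbar x) (φbar y))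
      ≤ ENNReal.ofReal lam * lengthMetricIn Γ x y := by
    have hcd0 : ∀ z : ℝ, cd L 0 = 0 := fun z =>
      le_antisymm (by simpa using cd_le_abs L 0) (cd_nonneg L 0)
    have hlen := length_lower_bound Γ
      (fun x y => cd L (arcl γ (par x) - arcl γ (par y)))
      (fun x y => cd_nonneg _ _)
      (fun x => by
        show cd L (arcl γ (par x) - arcl γ (par x)) = 0
        rw [sub_self]
        exact hcd0 0)
      (fun x _ y _ z _ => by
        show cd L (arcl γ (par x) - arcl γ (par z)) ≤
          cd L (arcl γ (par x) - arcl γ (par y)) + cd L (arcl γ (par y) - arcl γ (par z))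
        rw [show arcl γ (par x) - arcl γ (par z) =
          (arcl γ (par x) - arcl γ (par y)) + (arcl γ (par y) - arcl γ (par z)) by ring]
        exact cd_triangle _ _ _)
      hcdloc
    intro x hx y hy
    calc ENNReal.ofReal (dist (φbar x) (φbar y))
        ≤ ENNReal.ofReal (lam * cd L (arcl γ (par x) - arcl γ (par y))) :=
          ENNReal.ofReal_le_ofReal (mainbd x hx y hy)
      _ = ENNReal.ofReal lam * ENNReal.ofReal (cd L (arcl γ (par x) - arcl γ (par y))) :=
          ENNReal.ofReal_mul hlam
      _ ≤ ENNReal.ofReal lam * lengthMetricIn Γ x y :=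
          mul_le_mul_right (hlen x hx y hy) _
  have prop4 : ∀ x ∈ Γ, ∀ y ∈ Γ, dist (φbar x) (φbar y) ≤ 3 * lam * dist x y := by
    have hnear : ∀ x ∈ Γ, ∀ y ∈ Γ, dist x y < δ₁ →
        dist (φbar x) (φbar y) ≤ 2 * lam * dist x y := by
      intro x hx y hy hd
      have h9 := hδ₁p x hx y hy hd
      calc dist (φbar x) (φbar y) ≤ lam * cd L (arcl γ (par x) - arcl γ (par y)) :=
          mainbd x hx y hy
        _ ≤ lam * ((1+1) * dist x y) := mul_le_mul_of_nonneg_left h9 hlam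
        _ = 2 * lam * dist x y := by ring
    intro x hx y hy
    rcases le_or_gt (dist x y) (δ₁/2) with hc | hc
    · have h9 := hnear x hx y hy (by linarith)
      nlinarith [dist_nonneg (x := x) (y := y), mul_nonneg hlam (dist_nonneg (x := x) (y := y))]
    · obtain ⟨a, ha, hax⟩ := hdense x hx
      obtain ⟨b, hb, hby⟩ := hdense y hy
      have haΓ := hA ha
      have hbΓ := hA hb
      have h1 : dist (φbar x) (φbar a) ≤ 2 * lam * dist x a :=
        hnear x hx a haΓ (by linarith)
      have h2 : dist (φbar b) (φbar y) ≤ 2 * lam * dist b y := by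
        have h2' := hnear y hy b hbΓ (by linarith)
        calc dist (φbar b) (φbar y) = dist (φbar y) (φbar b) := dist_comm _ _
          _ ≤ 2 * lam * dist y b := h2'
          _ = 2 * lam * dist b y := by rw [dist_comm]
      have h3 : dist (φbar a) (φbar b) ≤ lam * dist a b := by
        rw [prop1 a ha, prop1 b hb]
        exact hφ a ha b hb
      have h4 : dist a b ≤ dist x y + δ₁/4 := by
        have := dist_triangle a x b
        have h5 := dist_triangle x y b
        have h6 : dist a x ≤ δ₁/8 := by rw [dist_comm]; exact hax
        have h7 : dist y b ≤ δ₁/8 := hby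
        calc dist a b ≤ dist a x + dist x b := dist_triangle a x b
          _ ≤ dist a x + (dist x y + dist y b) := by linarith [dist_triangle x y b]
          _ ≤ dist x y + δ₁/4 := by linarith
      have htr : dist (φbar x) (φbar y) ≤
          dist (φbar x) (φbar a) + dist (φbar a) (φbar b) + dist (φbar b) (φbar y) :=
        dist_triangle4 _ _ _ _
      have h8 : 2 * lam * dist x a ≤ 2 * lam * (δ₁/8) :=
        mul_le_mul_of_nonneg_left hax (by positivity)
      have h9 : 2 * lam * dist b y ≤ 2 * lam * (δ₁/8) := by
        apply mul_le_mul_of_nonneg_left ?_ (by positivity)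
        rw [dist_comm]
        exact hby
      have h10 : lam * dist a b ≤ lam * (dist x y + δ₁/4) :=
        mul_le_mul_of_nonneg_left h4 hlam
      have h11 : lam * (δ₁/2 + δ₁/4) ≤ lam * (2 * dist x y) :=
        mul_le_mul_of_nonneg_left (by linarith) hlam
      nlinarith
  exact ⟨φbar, prop1, prop2, prop3, prop4⟩
end

section
/- Let ‖·‖ be the Euclidean norm on ℝ², K′ ⊂ ℝ² measurable, x ∈ ℝ², s > 0, ρ′ ∈ (0,1), and let 0 < t < t′ < 1. Suppose that for every r ∈ (ts, t′s) the 1-dimensional Hausdorff measure of K′ ∩ ∂B̄(x,r) is at most 2π(1−ρ′)r. Then the Lebesgue measure of K′ ∩ B̄(x,s) is at most πs²·(1 − ρ′(t′² − t²)). -/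
open MeasureTheory Metric Set Real

local notation "E₂" => EuclideanSpace ℝ (Fin 2)

/-! In polar coordinates about `x`, `|S| = ∫ r · |{θ : x + r e^{iθ} ∈ S}| dr`, and the angular
measure on the circle of radius `r` is at most `H¹(S ∩ ∂B(x, r)) / r`: on an arc of angle `ℓ` the
map `z ↦ arg (z - x)` is `1 / (r (1 - ℓ² / 24))`-Lipschitz, since a chord of angle `φ` has length
`2 r |sin (φ / 2)| ≥ r |φ| (1 - φ² / 24)`, and then `ℓ → 0`. This coarea inequality bounds `K'` in
the annulus `ts < |y - x| < t's` by `π (1 - ρ') ((t's)² - (ts)²)`; the inner disc and the outer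
annulus are bounded by their areas. -/

open Function
open scoped ENNReal Complex

lemma tsum_measure_inter_le {α ι : Type*} [MeasurableSpace α] [Countable ι] (μ : Measure α)
    {E : ι → Set α} (hE : ∀ i, MeasurableSet (E i)) (hd : Pairwise (Disjoint on E)) (B : Set α) :
    ∑' i, μ (B ∩ E i) ≤ μ B :=
  calc ∑' i, μ (B ∩ E i) = ∑' i, μ.restrict (E i) B := by
        simp_rw [Measure.restrict_apply' (hE _)]
    _ ≤ Measure.sum (fun i ↦ μ.restrict (E i)) B := Measure.le_sum_apply _ _
    _ = μ.restrict (⋃ i, E i) B := by rw [Measure.restrict_iUnion hd hE]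
    _ ≤ μ B := Measure.restrict_apply_le _ _

namespace Complex

lemma abs_sub_mul_le_norm_exp_mul_I_sub_exp_mul_I (a b : ℝ) :
    |a - b| * (1 - (a - b) ^ 2 / 24) ≤ ‖cexp (a * I) - cexp (b * I)‖ := by
  have hchord : ‖cexp (a * I) - cexp (b * I)‖ = 2 * |Real.sin ((a - b) / 2)| := by
    have : cexp (a * I) - cexp (b * I) = cexp (b * I) * (cexp (I * ↑(a - b)) - 1) := by
      rw [mul_sub, ← Complex.exp_add]; push_cast; ring_nf
    rw [this, norm_mul, norm_exp_ofReal_mul_I, one_mul, norm_exp_I_mul_ofReal_sub_one,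
      norm_mul, Real.norm_eq_abs, Real.norm_eq_abs, abs_two]
  have hsin : |(a - b) / 2| - |Real.sin ((a - b) / 2)| ≤ |(a - b) / 2| ^ 3 / 6 :=
    (abs_sub_abs_le_abs_sub _ _).trans (Real.abs_sub_sin_le _)
  rw [abs_div, abs_two] at hsin
  rw [hchord]
  nlinarith [abs_nonneg (a - b), sq_abs (a - b)]

section Circle

variable {c : ℂ} {r : ℝ}

lemma sub_eq_mul_exp_arg_mul_I_of_mem_sphere {z : ℂ} (hz : z ∈ sphere c r) :
    z - c = r * cexp (arg (z - c) * I) := by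
  rw [← mem_sphere_iff_norm.mp hz, norm_mul_exp_arg_mul_I]

lemma lipschitzOnWith_arg_sub (hr : 0 < r) {a b : ℝ} (hab : (b - a) ^ 2 < 24) :
    LipschitzOnWith (Real.toNNReal (1 / (r * (1 - (b - a) ^ 2 / 24)))) (fun z ↦ arg (z - c))
      (sphere c r ∩ (fun z ↦ arg (z - c)) ⁻¹' Ioc a b) := by
  refine LipschitzOnWith.of_dist_le' fun z ⟨hz, hza⟩ w ⟨hw, hwa⟩ ↦ ?_
  have hz' := sub_eq_mul_exp_arg_mul_I_of_mem_sphere hz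
  have hw' := sub_eq_mul_exp_arg_mul_I_of_mem_sphere hw
  simp only [mem_preimage, mem_Ioc] at hza hwa
  set φ := arg (z - c)
  set ψ := arg (w - c)
  have hzw : dist z w = r * ‖cexp (φ * I) - cexp (ψ * I)‖ := by
    rw [dist_eq_norm, ← sub_sub_sub_cancel_right z w c, hz', hw', ← mul_sub, norm_mul, norm_real,
      Real.norm_of_nonneg hr.le]
  have hκ : (1 - (b - a) ^ 2 / 24) ≤ 1 - (φ - ψ) ^ 2 / 24 := by nlinarith
  rw [Real.dist_eq, hzw, one_div, ← div_eq_inv_mul, le_div_iff₀ (by nlinarith)]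
  calc |φ - ψ| * (r * (1 - (b - a) ^ 2 / 24)) ≤ r * (|φ - ψ| * (1 - (φ - ψ) ^ 2 / 24)) := by
        nlinarith [mul_le_mul_of_nonneg_left hκ (mul_nonneg hr.le (abs_nonneg (φ - ψ)))]
    _ ≤ r * ‖cexp (φ * I) - cexp (ψ * I)‖ := by
        gcongr; exact abs_sub_mul_le_norm_exp_mul_I_sub_exp_mul_I φ ψ

lemma arg_mul_exp_mul_I (hr : 0 < r) {θ : ℝ} (hθ : θ ∈ Ioc (-π) π) :
    arg (r * cexp (θ * I)) = θ := by
  rw [arg_real_mul _ hr, exp_mul_I, arg_cos_add_sin_mul_I hθ]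

lemma volume_angles_le (hr : 0 < r) {ℓ : ℝ} (hℓ : 0 < ℓ) (hℓ' : ℓ ^ 2 < 24) (A : Set ℂ) :
    volume {θ ∈ Ioc (-π) π | c + r * cexp (θ * I) ∈ A}
      ≤ ENNReal.ofReal (1 / (r * (1 - ℓ ^ 2 / 24))) * μH[1] (A ∩ sphere c r) := by
  set α : ℂ → ℝ := fun z ↦ arg (z - c)
  set arc : ℤ → Set ℂ := fun n ↦ α ⁻¹' Ioc (n • ℓ) ((n + 1) • ℓ)
  have hlength (n : ℤ) : (n + 1) • ℓ - n • ℓ = ℓ := by simp [add_smul]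
  have hcover : {θ ∈ Ioc (-π) π | c + r * cexp (θ * I) ∈ A}
      ⊆ ⋃ n, α '' (A ∩ sphere c r ∩ arc n) := by
    rintro θ ⟨hθ, hA⟩
    obtain ⟨n, hn⟩ := mem_iUnion.mp ((iUnion_Ioc_zsmul hℓ).symm ▸ mem_univ θ)
    have hαθ : α (c + r * cexp (θ * I)) = θ := by
      simp only [α, add_sub_cancel_left, arg_mul_exp_mul_I hr hθ]
    refine mem_iUnion.mpr ⟨n, _, ⟨⟨hA, ?_⟩, ?_⟩, hαθ⟩
    · rw [mem_sphere_iff_norm, add_sub_cancel_left, norm_mul, norm_exp_ofReal_mul_I, mul_one,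
        norm_real, Real.norm_of_nonneg hr.le]
    · rwa [mem_preimage, hαθ]
  have hpiece (n : ℤ) : volume (α '' (A ∩ sphere c r ∩ arc n))
      ≤ ENNReal.ofReal (1 / (r * (1 - ℓ ^ 2 / 24))) * μH[1] (A ∩ sphere c r ∩ arc n) := by
    have hlip := lipschitzOnWith_arg_sub (c := c) hr (a := n • ℓ) (b := (n + 1) • ℓ)
      (by rwa [hlength])
    rw [hlength] at hlip
    have := (hlip.mono fun z (hz : z ∈ A ∩ sphere c r ∩ arc n) ↦ ⟨hz.1.2, hz.2⟩)
      |>.hausdorffMeasure_image_le zero_le_one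
    rwa [ENNReal.rpow_one, hausdorffMeasure_real] at this
  have harc_disjoint : Pairwise (Disjoint on arc) := fun m n hmn ↦
    ((pairwise_disjoint_Ioc_zsmul ℓ) hmn).preimage α
  calc volume {θ ∈ Ioc (-π) π | c + r * cexp (θ * I) ∈ A}
      ≤ ∑' n, volume (α '' (A ∩ sphere c r ∩ arc n)) :=
        (measure_mono hcover).trans (measure_iUnion_le _)
    _ ≤ ∑' n, ENNReal.ofReal (1 / (r * (1 - ℓ ^ 2 / 24))) * μH[1] (A ∩ sphere c r ∩ arc n) :=
        ENNReal.tsum_le_tsum hpiece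
    _ ≤ ENNReal.ofReal (1 / (r * (1 - ℓ ^ 2 / 24))) * μH[1] (A ∩ sphere c r) := by
        rw [ENNReal.tsum_mul_left]
        gcongr
        exact tsum_measure_inter_le _
          (fun n ↦ measurable_arg.comp (measurable_id.sub_const c) measurableSet_Ioc)
          harc_disjoint _

lemma ofReal_mul_volume_angles_le (hr : 0 < r) (A : Set ℂ) :
    ENNReal.ofReal r * volume {θ ∈ Ioc (-π) π | c + r * cexp (θ * I) ∈ A}
      ≤ μH[1] (A ∩ sphere c r) := by
  refine ENNReal.le_of_forall_lt_one_mul_le fun a ha ↦ ?_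
  have ha' : a.toReal < 1 := ENNReal.toReal_lt_of_lt_ofReal (by simpa using ha)
  set ℓ := √(12 * (1 - a.toReal))
  have hℓ : ℓ ^ 2 = 12 * (1 - a.toReal) := Real.sq_sqrt (by linarith)
  have hκ : 1 - ℓ ^ 2 / 24 = (1 + a.toReal) / 2 := by rw [hℓ]; ring
  have hκpos : 0 < (1 + a.toReal) / 2 := by positivity
  calc a * (ENNReal.ofReal r * volume {θ ∈ Ioc (-π) π | c + r * cexp (θ * I) ∈ A})
      ≤ ENNReal.ofReal ((1 + a.toReal) / 2) * ENNReal.ofReal r *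
          volume {θ ∈ Ioc (-π) π | c + r * cexp (θ * I) ∈ A} := by
        rw [← mul_assoc]
        gcongr
        exact (ENNReal.le_ofReal_iff_toReal_le ha.ne_top hκpos.le).mpr (by linarith)
    _ ≤ ENNReal.ofReal ((1 + a.toReal) / 2) * ENNReal.ofReal r *
          (ENNReal.ofReal (1 / (r * ((1 + a.toReal) / 2))) * μH[1] (A ∩ sphere c r)) := by
        gcongr
        rw [← hκ]
        exact volume_angles_le hr (Real.sqrt_pos.mpr (by linarith)) (by linarith) A
    _ = μH[1] (A ∩ sphere c r) := by
        rw [← mul_assoc, ← ENNReal.ofReal_mul hκpos.le, ← ENNReal.ofReal_mul (by positivity)]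
        field_simp
        simp

end Circle

lemma volume_eq_lintegral_volume_angles {S : Set ℂ} (hS : MeasurableSet S) (c : ℂ) :
    volume S = ∫⁻ r in Ioi 0,
      ENNReal.ofReal r * volume {θ ∈ Ioo (-π) π | c + r * cexp (θ * I) ∈ S} := by
  have hS' : MeasurableSet ((c + ·) ⁻¹' S) := measurable_const_add c hS
  rw [← measure_preimage_add volume c S, ← lintegral_indicator_one hS',
    ← Complex.lintegral_comp_polarCoord_symm, polarCoord_target, Measure.volume_eq_prod,
    setLIntegral_prod]
  · refine setLIntegral_congr_fun measurableSet_Ioi fun r _ ↦ ?_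
    have hangles : MeasurableSet {θ : ℝ | c + r * cexp (θ * I) ∈ S} :=
      (by fun_prop : Measurable fun θ : ℝ ↦ c + r * cexp (θ * I)) hS
    simp only [Complex.polarCoord_symm_apply, ofReal_cos, ofReal_sin, ← exp_mul_I, smul_eq_mul]
    rw [lintegral_const_mul' _ _ ENNReal.ofReal_ne_top, ofPred_and, ofPred_mem_eq, inter_comm,
      ← Measure.restrict_apply hangles, ← lintegral_indicator_one hangles]
    rfl
  · refine ((ENNReal.measurable_ofReal.comp measurable_fst).smul
      ((measurable_one.indicator hS').comp ?_)).aemeasurable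
    rw [show ⇑Complex.polarCoord.symm = _ from funext Complex.polarCoord_symm_apply]
    fun_prop

theorem volume_le_lintegral_hausdorffMeasure_inter_sphere {S : Set ℂ} (hS : MeasurableSet S)
    (c : ℂ) : volume S ≤ ∫⁻ r in Ioi 0, μH[1] (S ∩ sphere c r) := by
  rw [volume_eq_lintegral_volume_angles hS c]
  refine setLIntegral_mono' measurableSet_Ioi fun r hr ↦ ?_
  calc ENNReal.ofReal r * volume {θ ∈ Ioo (-π) π | c + r * cexp (θ * I) ∈ S}
      ≤ ENNReal.ofReal r * volume {θ ∈ Ioc (-π) π | c + r * cexp (θ * I) ∈ S} := by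
        gcongr with θ
        exact Ioo_subset_Ioc_self
    _ ≤ μH[1] (S ∩ sphere c r) := ofReal_mul_volume_angles_le hr S

end Complex

lemma setLIntegral_Ioo_ofReal_const_mul {C a b : ℝ} (hC : 0 ≤ C) (ha : 0 ≤ a) (hab : a ≤ b) :
    ∫⁻ r in Ioo a b, ENNReal.ofReal (C * r) = ENNReal.ofReal (C * (b ^ 2 - a ^ 2) / 2) := by
  have hint : IntegrableOn (fun r ↦ C * r) (Ioo a b) :=
    (continuous_const.mul continuous_id).integrableOn_Icc.mono_set Ioo_subset_Icc_self
  have hnonneg : 0 ≤ᵐ[volume.restrict (Ioo a b)] fun r ↦ C * r :=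
    (ae_restrict_mem measurableSet_Ioo).mono fun r hr ↦ mul_nonneg hC (ha.trans hr.1.le)
  rw [← ofReal_integral_eq_lintegral_ofReal hint hnonneg, ← integral_Ioc_eq_integral_Ioo,
    ← intervalIntegral.integral_of_le hab, intervalIntegral.integral_const_mul, integral_id]
  ring_nf

section PlaneCoarea

variable {E : Type*} [NormedAddCommGroup E] [InnerProductSpace ℝ E] [FiniteDimensional ℝ E]
  [MeasurableSpace E] [BorelSpace E]

theorem volume_le_lintegral_hausdorffMeasure_inter_sphere (hE : Module.finrank ℝ E = 2)
    {S : Set E} (hS : MeasurableSet S) (x : E) :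
    volume S ≤ ∫⁻ r in Ioi 0, μH[1] (S ∩ sphere x r) := by
  let e : E ≃ₗᵢ[ℝ] ℂ := ((stdOrthonormalBasis ℝ E).reindex (finCongr hE)).repr.trans
    Complex.orthonormalBasisOneI.repr.symm
  have h := Complex.volume_le_lintegral_hausdorffMeasure_inter_sphere
    (e.symm.continuous.measurable hS) (e x)
  rw [e.symm.measurePreserving.measure_preimage hS.nullMeasurableSet] at h
  refine h.trans_eq (lintegral_congr fun r ↦ ?_)
  have hsphere : sphere (e x) r = e.symm ⁻¹' sphere x r := by
    rw [e.symm.preimage_sphere, e.symm_symm]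
  rw [hsphere, ← preimage_inter,
    e.symm.isometry.hausdorffMeasure_preimage (Or.inl zero_le_one), e.symm.surjective.range_eq,
    inter_univ]

theorem volume_inter_annulus_le (hE : Module.finrank ℝ E = 2) {K : Set E} (hK : MeasurableSet K)
    (x : E) (a b : ℝ) :
    volume (K ∩ (ball x b \ closedBall x a)) ≤ ∫⁻ r in Ioo a b, μH[1] (K ∩ sphere x r) := by
  set S := K ∩ (ball x b \ closedBall x a)
  have hsupp : (fun r ↦ μH[1] (S ∩ sphere x r)).support ⊆ Ioo a b := by
    intro r hr
    obtain ⟨y, ⟨-, hyb, hya⟩, hyr⟩ := nonempty_of_measure_ne_zero hr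
    rw [mem_sphere] at hyr
    rw [mem_ball, hyr] at hyb
    rw [mem_closedBall, hyr] at hya
    exact ⟨lt_of_not_ge hya, hyb⟩
  calc volume S ≤ ∫⁻ r in Ioi 0, μH[1] (S ∩ sphere x r) :=
        volume_le_lintegral_hausdorffMeasure_inter_sphere hE
          (hK.inter (measurableSet_ball.diff measurableSet_closedBall)) x
    _ ≤ ∫⁻ r, μH[1] (S ∩ sphere x r) := setLIntegral_le_lintegral _ _
    _ = ∫⁻ r in Ioo a b, μH[1] (S ∩ sphere x r) :=
        (setLIntegral_eq_of_support_subset hsupp).symm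
    _ ≤ ∫⁻ r in Ioo a b, μH[1] (K ∩ sphere x r) := by gcongr; exact inter_subset_left

theorem volume_inter_annulus_le_of_hausdorffMeasure_le (hE : Module.finrank ℝ E = 2)
    {K : Set E} (hK : MeasurableSet K) (x : E) {C a b : ℝ} (hC : 0 ≤ C) (ha : 0 ≤ a) (hab : a ≤ b)
    (h : ∀ r ∈ Ioo a b, μH[1] (K ∩ sphere x r) ≤ ENNReal.ofReal (C * r)) :
    volume (K ∩ (ball x b \ closedBall x a)) ≤ ENNReal.ofReal (C * (b ^ 2 - a ^ 2) / 2) :=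
  calc _ ≤ ∫⁻ r in Ioo a b, μH[1] (K ∩ sphere x r) := volume_inter_annulus_le hE hK x a b
    _ ≤ ∫⁻ r in Ioo a b, ENNReal.ofReal (C * r) := setLIntegral_mono' measurableSet_Ioo h
    _ = _ := setLIntegral_Ioo_ofReal_const_mul hC ha hab

end PlaneCoarea

lemma measure_inter_closedBall_le {X : Type*} [PseudoMetricSpace X] [MeasurableSpace X]
    (μ : Measure X) (K : Set X) (x : X) (a b s : ℝ) :
    μ (K ∩ closedBall x s) ≤ μ (closedBall x a) + μ (K ∩ (ball x b \ closedBall x a))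
      + μ (closedBall x s \ ball x b) := by
  have hcover : K ∩ closedBall x s
      ⊆ closedBall x a ∪ (K ∩ (ball x b \ closedBall x a)) ∪ (closedBall x s \ ball x b) := by
    rintro y ⟨hyK, hys⟩
    by_cases hya : y ∈ closedBall x a
    · exact .inl (.inl hya)
    by_cases hyb : y ∈ ball x b
    · exact .inl (.inr ⟨hyK, hyb, hya⟩)
    · exact .inr ⟨hys, hyb⟩
  calc μ (K ∩ closedBall x s)
      ≤ μ (closedBall x a ∪ (K ∩ (ball x b \ closedBall x a))) + μ (closedBall x s \ ball x b) :=
        (measure_mono hcover).trans (measure_union_le _ _)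
    _ ≤ _ := by gcongr; exact measure_union_le _ _

lemma volume_closedBall_diff_ball_fin_two (x : E₂) {ρ R : ℝ} (hρ : 0 ≤ ρ) (hρR : ρ ≤ R) :
    volume (closedBall x R \ ball x ρ) = ENNReal.ofReal (π * (R ^ 2 - ρ ^ 2)) := by
  rw [measure_sdiff (ball_subset_closedBall.trans (closedBall_subset_closedBall hρR))
    measurableSet_ball.nullMeasurableSet measure_ball_lt_top.ne,
    EuclideanSpace.volume_closedBall_fin_two, EuclideanSpace.volume_ball_fin_two,
    ← ENNReal.ofReal_pow (hρ.trans hρR), ← ENNReal.ofReal_pow hρ,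
    ← ENNReal.ofReal_mul (by positivity), ← ENNReal.ofReal_mul (by positivity),
    ← ENNReal.ofReal_sub _ (by positivity)]
  congr 1
  ring

/-- An annular coarea-type estimate in the Euclidean plane: if for every
radius `r ∈ (ts, t's)` the circle `∂B̄(x,r)` meets `K'` in `H¹`-measure at most
`2π(1-ρ')r`, then `|K' ∩ B̄(x,s)| ≤ πs²(1 - ρ'(t'² - t²))`. -/
theorem stmt_3 (K' : Set E₂) (hK' : MeasurableSet K') (x : E₂) (s ρ' t t' : ℝ)
    (hs : 0 < s) (hρ : ρ' ∈ Set.Ioo (0 : ℝ) 1)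
    (ht : 0 < t) (htt' : t < t') (ht'1 : t' < 1)
    (h : ∀ r ∈ Set.Ioo (t * s) (t' * s),
      μH[1] (K' ∩ Metric.sphere x r) ≤ ENNReal.ofReal (2 * π * (1 - ρ') * r)) :
    volume (K' ∩ Metric.closedBall x s)
      ≤ ENNReal.ofReal (π * s ^ 2 * (1 - ρ' * (t' ^ 2 - t ^ 2))) := by
  have hts : 0 ≤ t * s := by positivity
  have htts : t * s ≤ t' * s := by nlinarith
  have ht's : t' * s ≤ s := by nlinarith
  have hρ' : 0 ≤ 1 - ρ' := sub_nonneg.2 hρ.2.le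
  have hinner : 0 ≤ (t' * s) ^ 2 - (t * s) ^ 2 := sub_nonneg.2 (pow_le_pow_left₀ hts htts 2)
  have houter : 0 ≤ s ^ 2 - (t' * s) ^ 2 :=
    sub_nonneg.2 (pow_le_pow_left₀ (hts.trans htts) ht's 2)
  calc volume (K' ∩ closedBall x s)
      ≤ volume (closedBall x (t * s)) + volume (K' ∩ (ball x (t' * s) \ closedBall x (t * s)))
        + volume (closedBall x s \ ball x (t' * s)) :=
        measure_inter_closedBall_le volume K' x _ _ s
    _ ≤ ENNReal.ofReal (π * (t * s) ^ 2)
        + ENNReal.ofReal (2 * π * (1 - ρ') * ((t' * s) ^ 2 - (t * s) ^ 2) / 2)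
        + ENNReal.ofReal (π * (s ^ 2 - (t' * s) ^ 2)) := by
        rw [EuclideanSpace.volume_closedBall_fin_two, ← ENNReal.ofReal_pow hts,
          ← ENNReal.ofReal_mul (by positivity), mul_comm _ π,
          volume_closedBall_diff_ball_fin_two x (hts.trans htts) ht's]
        gcongr
        exact volume_inter_annulus_le_of_hausdorffMeasure_le finrank_euclideanSpace_fin hK' x
          (by positivity) hts htts h
    _ = ENNReal.ofReal (π * s ^ 2 * (1 - ρ' * (t' ^ 2 - t ^ 2))) := by
        rw [← ENNReal.ofReal_add (by positivity) (by positivity),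
          ← ENNReal.ofReal_add (by positivity) (by positivity)]
        ring_nf
end

section
/- Let Z be a complete metric space, let γ_k : S¹ → Z be continuous injective curves converging uniformly to an injective curve γ : S¹ → Z. Then for every ε > 0 there exists δ > 0 such that for every k ∈ ℕ and all points x, y ∈ Γ_k = γ_k(S¹) with d(x,y) < δ, one of the two arcs of Γ_k between x and y lies in the ball B(x, ε). -/
open Metric Set Filter Topology

/-!
For a single Jordan curve `c`, the parameters `(s, u, t, v)` witnessing that both arcs between
`c s` and `c t` leave `ball (c s) ε` form, once `s` is normalized to `[0, 1]`, a compact set on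
which `dist (c s) (c t)` is positive by injectivity, hence bounded below by some `δ > 0`.
Uniform convergence transfers such a `δ` from the limit curve to all `γ k` with `k` large, at the
cost of enlarging `ε` and shrinking `δ`; the finitely many other curves are handled one by one.
-/

lemma Function.Periodic.sub_intCast_eq {α : Type*} {c : ℝ → α} (hper : Function.Periodic c 1)
    (n : ℤ) (x : ℝ) : c (x - n) = c x := by
  simpa using hper.sub_int_mul_eq (x := x) n

lemma Function.Periodic.eq_or_eq_add_one_of_injOn {α : Type*} {c : ℝ → α}
    (hper : Function.Periodic c 1) (hinj : InjOn c (Ico 0 1)) {a b : ℝ} (hab : a ≤ b)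
    (hba : b ≤ a + 1) (h : c a = c b) :
    b = a ∨ b = a + 1 := by
  have hfract : ∀ x, c (Int.fract x) = c x := fun x => by
    rw [← Int.self_sub_floor, hper.sub_intCast_eq]
  obtain ⟨z, hz⟩ := Int.fract_eq_fract.1 <|
    hinj ⟨Int.fract_nonneg b, Int.fract_lt_one b⟩ ⟨Int.fract_nonneg a, Int.fract_lt_one a⟩
      (by rw [hfract, hfract, h])
  have hz0 : 0 ≤ z := by exact_mod_cast (show (0 : ℝ) ≤ z by linarith)
  have hz1 : z ≤ 1 := by exact_mod_cast (show (z : ℝ) ≤ 1 by linarith)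
  obtain rfl | rfl : z = 0 ∨ z = 1 := by omega
  · left; simp only [Int.cast_zero] at hz; linarith
  · right; simp only [Int.cast_one] at hz; linarith

section SmallArcs

variable {Z : Type*} [MetricSpace Z]

def HasSmallArcs (c : ℝ → Z) (δ ε : ℝ) : Prop :=
  ∀ s t : ℝ, s ≤ t → t ≤ s + 1 → dist (c s) (c t) < δ →
    c '' Icc s t ⊆ ball (c s) ε ∨ c '' Icc t (s + 1) ⊆ ball (c s) ε

lemma HasSmallArcs.mono {c : ℝ → Z} {δ δ' ε ε' : ℝ} (h : HasSmallArcs c δ ε) (hδ : δ' ≤ δ)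
    (hε : ε ≤ ε') : HasSmallArcs c δ' ε' := fun s t hst hts hd =>
  (h s t hst hts (hd.trans_le hδ)).imp
    (·.trans (ball_subset_ball hε)) (·.trans (ball_subset_ball hε))

lemma HasSmallArcs.eventually {c : ℝ → Z} {δ ε : ℝ} (h : HasSmallArcs c δ ε) (hδ : 0 < δ) :
    ∀ᶠ δ' in 𝓝[>] 0, HasSmallArcs c δ' ε :=
  eventually_of_mem (Ioo_mem_nhdsGT hδ) fun _ hδ' => h.mono hδ'.2.le le_rfl

lemma HasSmallArcs.of_dist_lt {c c' : ℝ → Z} {δ ε η : ℝ} (h : HasSmallArcs c' (δ + 2 * η) ε)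
    (hclose : ∀ x, dist (c x) (c' x) < η) : HasSmallArcs c δ (ε + 2 * η) := by
  intro s t hst hts hd
  have hd' : dist (c' s) (c' t) < δ + 2 * η := by
    calc dist (c' s) (c' t) ≤ dist (c' s) (c s) + dist (c s) (c t) + dist (c t) (c' t) :=
          dist_triangle4 _ _ _ _
      _ < η + δ + η := by
          rw [dist_comm (c' s)]; gcongr <;> exact hclose _
      _ = δ + 2 * η := by ring
  have hball : ∀ x, c' x ∈ ball (c' s) ε → c x ∈ ball (c s) (ε + 2 * η) := fun x hx => by
    rw [mem_ball] at hx ⊢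
    calc dist (c x) (c s) ≤ dist (c x) (c' x) + dist (c' x) (c' s) + dist (c' s) (c s) :=
          dist_triangle4 _ _ _ _
      _ < η + ε + η := by
          rw [dist_comm (c' s)]; gcongr <;> exact hclose _
      _ = ε + 2 * η := by ring
  refine (h s t hst hts hd').imp ?_ ?_ <;>
    exact fun harc _ ⟨x, hx, hcx⟩ => hcx ▸ hball x (harc ⟨x, hx, rfl⟩)

lemma TendstoUniformly.eventually_hasSmallArcs {ι : Type*} {p : Filter ι} {F : ι → ℝ → Z}
    {f : ℝ → Z} (hF : TendstoUniformly F f p) {δ ε η : ℝ} (hη : 0 < η)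
    (hf : HasSmallArcs f (δ + 2 * η) ε) : ∀ᶠ i in p, HasSmallArcs (F i) δ (ε + 2 * η) :=
  (Metric.tendstoUniformly_iff.1 hF η hη).mono fun _ hi =>
    hf.of_dist_lt fun x => by rw [dist_comm]; exact hi x

/-- Witnesses `(s, u, t, v)` that both arcs of `c` between `c s` and `c t` leave `ball (c s) ε`,
with `s` normalized to `[0, 1]` so that the set is compact. -/
def arcEscapeSet (c : ℝ → Z) (ε : ℝ) : Set (ℝ × ℝ × ℝ × ℝ) :=
  {p | 0 ≤ p.1 ∧ p.1 ≤ 1 ∧ p.1 ≤ p.2.1 ∧ p.2.1 ≤ p.2.2.1 ∧ p.2.2.1 ≤ p.2.2.2 ∧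
    p.2.2.2 ≤ p.1 + 1 ∧ ε ≤ dist (c p.2.1) (c p.1) ∧ ε ≤ dist (c p.2.2.2) (c p.1)}

lemma isCompact_arcEscapeSet {c : ℝ → Z} (hcont : Continuous c) (ε : ℝ) :
    IsCompact (arcEscapeSet c ε) := by
  have hbox : IsCompact (Icc (0 : ℝ) 1 ×ˢ Icc (0 : ℝ) 2 ×ˢ Icc (0 : ℝ) 2 ×ˢ Icc (0 : ℝ) 2) :=
    isCompact_Icc.prod (isCompact_Icc.prod (isCompact_Icc.prod isCompact_Icc))
  refine hbox.of_isClosed_subset ?_ ?_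
  · simp only [arcEscapeSet, ofPred_and]
    apply_rules [IsClosed.inter, isClosed_le] <;> fun_prop
  · rintro ⟨s, u, t, v⟩ ⟨h0, h1, hsu, hut, htv, hvs, -⟩
    refine ⟨⟨h0, h1⟩, ⟨?_, ?_⟩, ⟨?_, ?_⟩, ⟨?_, ?_⟩⟩ <;> linarith

lemma dist_pos_of_mem_arcEscapeSet {c : ℝ → Z} (hper : Function.Periodic c 1)
    (hinj : InjOn c (Ico 0 1)) {ε : ℝ} (hε : 0 < ε) {s u t v : ℝ}
    (hp : (s, u, t, v) ∈ arcEscapeSet c ε) : 0 < dist (c s) (c t) := by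
  simp only [arcEscapeSet, mem_ofPred_eq] at hp
  obtain ⟨-, -, hsu, hut, htv, hvs, hεu, hεv⟩ := hp
  refine dist_pos.2 fun h => ?_
  rcases hper.eq_or_eq_add_one_of_injOn hinj (hsu.trans hut) (htv.trans hvs) h with rfl | rfl
  · rw [le_antisymm hut hsu, dist_self] at hεu; linarith
  · rw [le_antisymm hvs htv, hper, dist_self] at hεv; linarith

lemma exists_hasSmallArcs {c : ℝ → Z} (hper : Function.Periodic c 1) (hcont : Continuous c)
    (hinj : InjOn c (Ico 0 1)) {ε : ℝ} (hε : 0 < ε) : ∃ δ > 0, HasSmallArcs c δ ε := by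
  obtain ⟨δ, hδ, hδle⟩ := (isCompact_arcEscapeSet hcont ε).exists_forall_le'
    (f := fun p => dist (c p.1) (c p.2.2.1)) (by fun_prop)
    fun ⟨_, _, _, _⟩ hp => dist_pos_of_mem_arcEscapeSet hper hinj hε hp
  refine ⟨δ, hδ, fun s t hst hts hd => ?_⟩
  by_contra! h
  obtain ⟨⟨_, ⟨u, hu, rfl⟩, hεu⟩, ⟨_, ⟨v, hv, rfl⟩, hεv⟩⟩ := And.imp not_subset.1 not_subset.1 h
  rw [mem_ball, not_lt] at hεu hεv
  set n := ⌊s⌋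
  have hshift := hper.sub_intCast_eq n
  have hn : (n : ℝ) ≤ s ∧ s < n + 1 := ⟨Int.floor_le s, Int.lt_floor_add_one s⟩
  refine (hδle (s - n, u - n, t - n, v - n) ⟨?_, ?_, ?_, ?_, ?_, ?_, ?_, ?_⟩).not_gt ?_
  all_goals simp only [hshift]
  all_goals first | assumption | linarith [hu.1, hu.2, hv.1, hv.2]

end SmallArcs

theorem stmt_12_general {Z : Type*} [MetricSpace Z]
    (γ : ℕ → ℝ → Z) (γlim : ℝ → Z)
    (hper : ∀ k, Function.Periodic (γ k) 1) (hperlim : Function.Periodic γlim 1)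
    (hcont : ∀ k, Continuous (γ k)) (hcontlim : Continuous γlim)
    (hinj : ∀ k, Set.InjOn (γ k) (Set.Ico 0 1)) (hinjlim : Set.InjOn γlim (Set.Ico 0 1))
    (hunif : TendstoUniformly γ γlim atTop) :
    ∀ ε > 0, ∃ δ > 0, ∀ k : ℕ, ∀ s t : ℝ, s ≤ t → t ≤ s + 1 →
      dist (γ k s) (γ k t) < δ →
        γ k '' Set.Icc s t ⊆ Metric.ball (γ k s) ε ∨
        γ k '' Set.Icc t (s + 1) ⊆ Metric.ball (γ k s) ε := by
  intro ε hε
  obtain ⟨δ₀, hδ₀, hlim⟩ := exists_hasSmallArcs hperlim hcontlim hinjlim (half_pos hε)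
  set η := min (δ₀ / 4) (ε / 4)
  have hη : 0 < η := by positivity
  obtain ⟨N, hN⟩ := eventually_atTop.1 <|
    hunif.eventually_hasSmallArcs (δ := δ₀ / 2) hη (hlim.mono (by grind) le_rfl)
  have htail : ∀ᶠ δ in 𝓝[>] 0, ∀ k ≥ N, HasSmallArcs (γ k) δ ε :=
    eventually_of_mem (Ioo_mem_nhdsGT (half_pos hδ₀)) fun δ hδ k hk =>
      (hN k hk).mono hδ.2.le (by grind)
  have hhead : ∀ᶠ δ in 𝓝[>] 0, ∀ k < N, HasSmallArcs (γ k) δ ε :=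
    (eventually_all_finite (finite_lt_nat N)).2 fun k _ => by
      obtain ⟨δ, hδ, hk⟩ := exists_hasSmallArcs (hper k) (hcont k) (hinj k) hε
      exact hk.eventually hδ
  obtain ⟨δ, ⟨hδtail, hδhead⟩, hδ⟩ := ((htail.and hhead).and self_mem_nhdsWithin).exists
  exact ⟨δ, hδ, fun k => (le_or_gt N k).elim (hδtail k) (hδhead k)⟩

/-- Let `γ_k : S¹ → Z` be continuous injective curves (modelled as continuous
`1`-periodic maps `ℝ → Z`, injective on `[0,1)`) converging uniformly to an injective curve `γ`.
Then for every `ε > 0` there is `δ > 0` such that for all `k` and all parameters `s ≤ t ≤ s + 1`,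
if `dist (γ_k s) (γ_k t) < δ` then one of the two arcs of `Γ_k = γ_k(S¹)` between `γ_k s` and
`γ_k t` (namely `γ_k([s,t])` or `γ_k([t, s+1])`) lies in the ball `B(γ_k s, ε)`. -/
theorem stmt_12 {Z : Type*} [MetricSpace Z] [CompleteSpace Z]
    (γ : ℕ → ℝ → Z) (γlim : ℝ → Z)
    (hper : ∀ k, Function.Periodic (γ k) 1) (hperlim : Function.Periodic γlim 1)
    (hcont : ∀ k, Continuous (γ k)) (hcontlim : Continuous γlim)
    (hinj : ∀ k, Set.InjOn (γ k) (Set.Ico 0 1)) (hinjlim : Set.InjOn γlim (Set.Ico 0 1))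
    (hunif : TendstoUniformly γ γlim atTop) :
    ∀ ε > 0, ∃ δ > 0, ∀ k : ℕ, ∀ s t : ℝ, s ≤ t → t ≤ s + 1 →
      dist (γ k s) (γ k t) < δ →
        γ k '' Set.Icc s t ⊆ Metric.ball (γ k s) ε ∨
        γ k '' Set.Icc t (s + 1) ⊆ Metric.ball (γ k s) ε :=
  stmt_12_general γ γlim hper hperlim hcont hcontlim hinj hinjlim hunif
end
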